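/- arXiv:1703.03896 — 7 statements merged into one kernel-verified Lean document; each statement's English description precedes it below -/
import Mathlib

section
/- Let k ≥ 4 and n be integers with n ≥ 30k² if k ∈ {4,5} and n ≥ 4k² if k ≥ 6. If F is a non-trivial intersecting family of k-element subsets of [n], then δ(F) ≤ C(n−2, k−2) − C(n−k−2, k−2). -/
/-!
Let `τ` be the least size of a set meeting every member of `F`; non-triviality gives
`2 ≤ τ ≤ k`. A set `D` with `|D| < τ` is missed by some member, which every member through `D`
must meet, so branching shows that at most `k ^ (τ - |D|) C(n-τ, k-τ)` members contain `D`.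

For `τ ≥ 4` this bounds `|F|` by `4k³ C(n-4, k-4)`, and a vertex of at most average degree
works. For `τ ∈ {2, 3}` one picks a vertex `z` outside the boundedly many members used when
branching from the cover, so that branching from `z` always reaches four distinct points. For `τ = 3` this
gives `d(z) ≤ 3k² C(n-4, k-4)`. For a cover `{x, y}`, the members through `z` containing `y` but
not `x` all contain the common part `K` of such members, while those containing `x` but not `y`
either meet `K` or branch through members missing a point of `K`; when both common parts are
trivial, both sides are bounded by branching.

Every case then reduces to `3k C(n-4, k-4) ≤ C(n-k-2, k-3)` for `n ≥ 4k²` and the telescoped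
Pascal bound `C(n-k-2, k-2) + d C(n-k-2, k-3) ≤ C(n-k-2+d, k-2)`.
-/

namespace HiltonMilner

open Finset

section Binomial

theorem choose_succ_add_mul_choose_le (m r : ℕ) :
    ∀ d, m.choose (r + 1) + d * m.choose r ≤ (m + d).choose (r + 1)
  | 0 => by simp
  | d + 1 => by
    have ih := choose_succ_add_mul_choose_le m r d
    have hmono : m.choose r ≤ (m + d).choose r := Nat.choose_le_add _ _ _
    rw [← add_assoc, Nat.choose_succ_succ']
    linarith

theorem choose_add_le_choose_succ_add_mul (m r : ℕ) :
    ∀ d, (m + d).choose (r + 1) ≤ m.choose (r + 1) + d * (m + d - 1).choose r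
  | 0 => by simp
  | d + 1 => by
    have ih := choose_add_le_choose_succ_add_mul m r d
    have hmono : (m + d - 1).choose r ≤ (m + d).choose r := Nat.choose_le_choose _ (by omega)
    rw [← add_assoc, Nat.choose_succ_succ', Nat.add_sub_cancel]
    nlinarith

theorem choose_le_choose_add_add (m r : ℕ) : ∀ i, m.choose r ≤ (m + i).choose (r + i)
  | 0 => le_rfl
  | i + 1 => by
    have ih := choose_le_choose_add_add m r i
    rw [← add_assoc, ← add_assoc, Nat.choose_succ_succ']
    omega

/-- A Bernoulli-type bound: `C(N - d, r) / C(N, r) ≥ 1 - d r / N`. -/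
theorem sub_mul_mul_choose_le_mul_choose_sub {N d : ℕ} (hd : d ≤ N) :
    ∀ r, (N - d * r) * N.choose r ≤ N * (N - d).choose r
  | 0 => by simp
  | r + 1 => by
    obtain ⟨m, rfl⟩ : ∃ m, N = m + d := ⟨N - d, by omega⟩
    rw [Nat.add_sub_cancel]
    rcases Nat.eq_zero_or_pos (m + d) with h0 | hpos
    · simp [h0]
    have hpascal := choose_add_le_choose_succ_add_mul m r d
    have hid : (m + d) * (m + d - 1).choose r = (m + d).choose (r + 1) * (r + 1) := by
      simpa [Nat.sub_add_cancel hpos] using Nat.add_one_mul_choose_eq (m + d - 1) r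
    calc (m + d - d * (r + 1)) * (m + d).choose (r + 1)
        = (m + d) * (m + d).choose (r + 1) - d * ((m + d).choose (r + 1) * (r + 1)) := by
          rw [Nat.sub_mul]; ring_nf
      _ ≤ (m + d) * m.choose (r + 1) := by
          rw [← hid, Nat.sub_le_iff_le_add]
          nlinarith

variable {n k : ℕ}

theorem three_mul_mul_choose_le (hk : 4 ≤ k) (hn : 4 * k ^ 2 ≤ n) :
    3 * k * (n - 4).choose (k - 4) ≤ (n - k - 2).choose (k - 3) := by
  have hkk : k * k + 2 * k + 4 ≤ n := by nlinarith
  have hpoly : 3 * k * ((k - 3) * (n - 4)) ≤ (n - 2 * k + 2) * (n - 4 - (k - 2) * (k - 4)) := by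
    have h1 : (k - 2) * (k - 4) ≤ n - 4 := by
      have : (k - 2) * (k - 4) ≤ k * k := Nat.mul_le_mul (by omega) (by omega)
      omega
    zify [h1, (by omega : 2 * k ≤ n), (by omega : 3 ≤ k), (by omega : 4 ≤ n),
      (by omega : 2 ≤ k), hk]
    have hn' : (4 : ℤ) * k ^ 2 ≤ n := by exact_mod_cast hn
    have hk' : (4 : ℤ) ≤ k := by exact_mod_cast hk
    nlinarith [mul_nonneg (by positivity : (0 : ℤ) ≤ n) (sub_nonneg.2 hn'),
      mul_nonneg (sub_nonneg.2 hk') (sub_nonneg.2 hk')]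
  have hratio : (n - 4 - (k - 2) * (k - 4)) * (n - 4).choose (k - 4)
      ≤ (n - 4) * (n - k - 2).choose (k - 4) := by
    have h := sub_mul_mul_choose_le_mul_choose_sub (N := n - 4) (d := k - 2) (by omega) (k - 4)
    rwa [show n - 4 - (k - 2) = n - k - 2 by omega] at h
  have hid :
      (n - k - 2).choose (k - 3) * (k - 3) = (n - k - 2).choose (k - 4) * (n - 2 * k + 2) := by
    have h := Nat.choose_succ_right_eq (n - k - 2) (k - 4)
    rwa [show k - 4 + 1 = k - 3 by omega, show n - k - 2 - (k - 4) = n - 2 * k + 2 by omega] at h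
  refine Nat.le_of_mul_le_mul_left ?_ (Nat.mul_pos (by omega : 0 < k - 3) (by omega : 0 < n - 4))
  calc (k - 3) * (n - 4) * (3 * k * (n - 4).choose (k - 4))
      = 3 * k * ((k - 3) * (n - 4)) * (n - 4).choose (k - 4) := by ring
    _ ≤ (n - 2 * k + 2) * (n - 4 - (k - 2) * (k - 4)) * (n - 4).choose (k - 4) :=
        Nat.mul_le_mul_right _ hpoly
    _ = (n - 2 * k + 2) * ((n - 4 - (k - 2) * (k - 4)) * (n - 4).choose (k - 4)) := by ring
    _ ≤ (n - 2 * k + 2) * ((n - 4) * (n - k - 2).choose (k - 4)) := Nat.mul_le_mul_left _ hratio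
    _ = (n - 4) * ((n - k - 2).choose (k - 4) * (n - 2 * k + 2)) := by ring
    _ = (k - 3) * (n - 4) * (n - k - 2).choose (k - 3) := by rw [← hid]; ring

theorem mul_pow_mul_choose_le (hk : 4 ≤ k) (hn : 4 * k ^ 2 ≤ n) {t : ℕ} (ht : 4 ≤ t) (htk : t ≤ k) :
    t * k ^ (t - 1) * (n - t).choose (k - t) ≤ 4 * k ^ 3 * (n - 4).choose (k - 4) := by
  induction t, ht using Nat.le_induction with
  | base => rfl
  | succ t ht ih =>
    refine le_trans ?_ (ih (by omega))
    have hkk : 2 * (k * k) + k ≤ n := by nlinarith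
    have hid : (n - t) * (n - (t + 1)).choose (k - (t + 1)) = (n - t).choose (k - t) * (k - t) := by
      have h := Nat.add_one_mul_choose_eq (n - (t + 1)) (k - (t + 1))
      rwa [show n - (t + 1) + 1 = n - t by omega, show k - (t + 1) + 1 = k - t by omega] at h
    have hfac : (t + 1) * k * (k - t) ≤ t * (n - t) := by
      have h1 : (t + 1) * k * (k - t) ≤ t * (2 * (k * k)) := by
        calc (t + 1) * k * (k - t) ≤ (2 * t) * k * k :=
              Nat.mul_le_mul (Nat.mul_le_mul_right _ (by omega)) (by omega)
          _ = t * (2 * (k * k)) := by ring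
      exact h1.trans (Nat.mul_le_mul_left _ (by omega))
    have hpow : k ^ (t + 1 - 1) = k * k ^ (t - 1) := by
      rw [← pow_succ']; congr 1; omega
    refine Nat.le_of_mul_le_mul_left ?_ (by omega : 0 < n - t)
    calc (n - t) * ((t + 1) * k ^ (t + 1 - 1) * (n - (t + 1)).choose (k - (t + 1)))
        = (t + 1) * k * k ^ (t - 1) * ((n - t) * (n - (t + 1)).choose (k - (t + 1))) := by
          rw [hpow]; ring
      _ = (t + 1) * k * (k - t) * (k ^ (t - 1) * (n - t).choose (k - t)) := by rw [hid]; ring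
      _ ≤ t * (n - t) * (k ^ (t - 1) * (n - t).choose (k - t)) := Nat.mul_le_mul_right _ hfac
      _ = (n - t) * (t * k ^ (t - 1) * (n - t).choose (k - t)) := by ring

theorem mul_mul_choose_add_choose_le (hk : 4 ≤ k) (hn : 4 * k ^ 2 ≤ n) {s : ℕ} (hs : 2 ≤ s)
    (hsk : s < k) :
    (k - s) * ((k - 1) * (n - 4).choose (k - 4)) + (n - 2 - s).choose (k - 1 - s)
      ≤ (k - s) * (n - k - 2).choose (k - 3) := by
  have hkey := three_mul_mul_choose_le hk hn
  have hkk : k * k + 2 * k + 4 ≤ n := by nlinarith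
  set E := (n - 4).choose (k - 4)
  set Q := (n - k - 2).choose (k - 3)
  have hkE : k * E ≤ Q := le_trans (Nat.mul_le_mul_right _ (by omega)) hkey
  rcases hs.eq_or_lt with rfl | hs3
  · have hpascal := choose_add_le_choose_succ_add_mul (n - k - 2) (k - 4) (k - 2)
    rw [show n - k - 2 + (k - 2) = n - 4 by omega, show k - 4 + 1 = k - 3 by omega,
      show n - 4 - 1 = n - 5 by omega] at hpascal
    have hE : (n - 5).choose (k - 4) ≤ E := Nat.choose_le_choose _ (by omega)
    rw [show n - 2 - 2 = n - 4 by omega, show k - 1 - 2 = k - 3 by omega]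
    have h3 : 3 * ((k - 2) * (k * E)) ≤ 3 * ((k - 3) * Q) :=
      calc 3 * ((k - 2) * (k * E)) = (k - 2) * (3 * k * E) := by ring
        _ ≤ (k - 2) * Q := Nat.mul_le_mul_left _ hkey
        _ ≤ 3 * ((k - 3) * Q) := by rw [← mul_assoc]; exact Nat.mul_le_mul_right _ (by omega)
    have h4 : (k - 2) * ((k - 1) * E) + (k - 2) * E = (k - 2) * (k * E) := by
      rw [← mul_add, ← Nat.succ_mul, show (k - 1).succ = k by omega]
    have h5 : (k - 3) * Q + Q = (k - 2) * Q := by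
      rw [← Nat.succ_mul, show (k - 3).succ = k - 2 by omega]
    have := Nat.mul_le_mul_left (k - 2) hE
    omega
  · have hdiag := choose_le_choose_add_add (n - 2 - s) (k - 1 - s) (s - 3)
    rw [show n - 2 - s + (s - 3) = n - 5 by omega,
      show k - 1 - s + (s - 3) = k - 4 by omega] at hdiag
    have hE : (n - 2 - s).choose (k - 1 - s) ≤ E :=
      hdiag.trans (Nat.choose_le_choose _ (by omega))
    calc (k - s) * ((k - 1) * E) + (n - 2 - s).choose (k - 1 - s)
        ≤ (k - s) * ((k - 1) * E) + (k - s) * E := by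
          have := Nat.mul_le_mul_right E (by omega : 1 ≤ k - s)
          omega
      _ = (k - s) * (k * E) := by
          rw [← mul_add, ← Nat.succ_mul, show (k - 1).succ = k by omega]
      _ ≤ (k - s) * Q := Nat.mul_le_mul_left _ hkE

theorem mul_mul_choose_add_mul_mul_choose_le (hk : 4 ≤ k) (hn : 4 * k ^ 2 ≤ n) :
    (k - 1) * ((k - 1) * (n - 4).choose (k - 4)) + (k - 1) * ((k - 1) * (n - 4).choose (k - 4))
      ≤ (k - 1) * (n - k - 2).choose (k - 3) :=
  calc _ = (k - 1) * (2 * (k - 1) * (n - 4).choose (k - 4)) := by ring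
    _ ≤ _ := Nat.mul_le_mul_left _
      ((Nat.mul_le_mul_right _ (by omega)).trans (three_mul_mul_choose_le hk hn))

theorem add_add_add_choose_le (hk : 4 ≤ k) (hn : 4 * k ^ 2 ≤ n) {s a b c : ℕ}
    (hsk : s ≤ k) (ha : a ≤ (n - 3).choose (k - 3))
    (hb : b + (n - 2 - s).choose (k - 2)
      ≤ (n - 3).choose (k - 2) + (k - s) * ((k - 1) * (n - 4).choose (k - 4)))
    (hc : c + (k - s) * ((k - 1) * (n - 4).choose (k - 4)) ≤ (k - s) * (n - k - 2).choose (k - 3)) :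
    a + b + c + (n - k - 2).choose (k - 2) ≤ (n - 2).choose (k - 2) := by
  have hkk : k * k + 2 * k + 4 ≤ n := by nlinarith
  have htel := choose_succ_add_mul_choose_le (n - k - 2) (k - 3) (k - s)
  rw [show k - 3 + 1 = k - 2 by omega, show n - k - 2 + (k - s) = n - 2 - s by omega] at htel
  have hpascal := Nat.choose_succ_succ' (n - 3) (k - 3)
  rw [show n - 3 + 1 = n - 2 by omega, show k - 3 + 1 = k - 2 by omega] at hpascal
  omega

theorem le_choose_sub_choose_of_le_mul (hk : 4 ≤ k) (hn : 4 * k ^ 2 ≤ n) {d : ℕ}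
    (hd : d ≤ k * (n - k - 2).choose (k - 3)) :
    d ≤ (n - 2).choose (k - 2) - (n - k - 2).choose (k - 2) := by
  have hkk : k * k + 2 * k + 4 ≤ n := by nlinarith
  have htel := choose_succ_add_mul_choose_le (n - k - 2) (k - 3) k
  rw [show k - 3 + 1 = k - 2 by omega, show n - k - 2 + k = n - 2 by omega] at htel
  omega

end Binomial

section Counting

variable {α : Type*} [DecidableEq α] {k : ℕ}

theorem card_le_card_filter_powersetCard {G : Finset (Finset α)} {D U : Finset α}
    (p : Finset α → Prop) [DecidablePred p]
    (hG : ∀ S ∈ G, #S = k ∧ D ⊆ S ∧ S ⊆ U ∧ p (S \ D)) :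
    #G ≤ #{T ∈ powersetCard (k - #D) (U \ D) | p T} := by
  refine card_le_card_of_injOn (· \ D) (fun S hS => ?_) (fun S hS T hT hST => ?_)
  · obtain ⟨hSk, hDS, hSU, hp⟩ := hG S hS
    rw [mem_coe, mem_filter, mem_powersetCard]
    exact ⟨⟨sdiff_subset_sdiff hSU le_rfl, by rw [card_sdiff_of_subset hDS, hSk]⟩, hp⟩
  · rw [← sdiff_union_of_subset (hG S hS).2.1, ← sdiff_union_of_subset (hG T hT).2.1]
    exact congrArg (· ∪ D) hST

theorem card_le_choose_of_subset {G : Finset (Finset α)} {D U : Finset α} (hDU : D ⊆ U)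
    (hG : ∀ S ∈ G, #S = k ∧ D ⊆ S ∧ S ⊆ U) : #G ≤ (#U - #D).choose (k - #D) := by
  have h := card_le_card_filter_powersetCard (fun _ => True) fun S hS => ⟨(hG S hS).1,
    (hG S hS).2.1, (hG S hS).2.2, trivial⟩
  rwa [filter_true, card_powersetCard, card_sdiff_of_subset hDU] at h

theorem card_add_choose_le_of_inter_nonempty {G : Finset (Finset α)} {D U W : Finset α}
    (hDU : D ⊆ U) (hWU : W ⊆ U) (hWD : Disjoint W D)
    (hG : ∀ S ∈ G, #S = k ∧ D ⊆ S ∧ S ⊆ U ∧ (S ∩ W).Nonempty) :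
    #G + (#U - #D - #W).choose (k - #D) ≤ (#U - #D).choose (k - #D) := by
  have hG' := card_le_card_filter_powersetCard (fun T => (T ∩ W).Nonempty) fun S hS => by
    obtain ⟨hSk, hDS, hSU, hSW⟩ := hG S hS
    refine ⟨hSk, hDS, hSU, ?_⟩
    rwa [sdiff_inter_right_comm, (hWD.mono_left inter_subset_right).sdiff_eq_left]
  have hmiss : {T ∈ powersetCard (k - #D) (U \ D) | ¬(T ∩ W).Nonempty}
      = powersetCard (k - #D) ((U \ D) \ W) := by
    ext T
    simp only [mem_filter, mem_powersetCard, not_nonempty_iff_eq_empty, subset_sdiff,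
      disjoint_iff_inter_eq_empty]
    tauto
  have hsplit := card_filter_add_card_filter_not (s := powersetCard (k - #D) (U \ D))
    (fun T => (T ∩ W).Nonempty)
  rw [hmiss, card_powersetCard, card_powersetCard, card_sdiff_of_subset hDU,
    card_sdiff_of_subset (subset_sdiff.2 ⟨hWU, hWD⟩), card_sdiff_of_subset hDU] at hsplit
  omega

theorem card_le_mul_of_forall_inter_nonempty {G : Finset (Finset α)} {B : Finset α} {m c : ℕ}
    (hB : #B ≤ m) (hGB : ∀ S ∈ G, (S ∩ B).Nonempty) (hc : ∀ w ∈ B, #{S ∈ G | w ∈ S} ≤ c) :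
    #G ≤ m * c :=
  calc #G ≤ #(B.biUnion fun w => {S ∈ G | w ∈ S}) := card_le_card fun S hS => by
        obtain ⟨w, hw⟩ := hGB S hS
        rw [mem_inter] at hw
        exact mem_biUnion.2 ⟨w, hw.2, mem_filter.2 ⟨hS, hw.1⟩⟩
    _ ≤ #B * c := card_biUnion_le_card_mul _ _ _ hc
    _ ≤ m * c := Nat.mul_le_mul_right _ hB

theorem card_filter_mem_le_add_add {F : Finset (Finset α)} {x y : α}
    (hcov : ∀ S ∈ F, x ∈ S ∨ y ∈ S) (z : α) :
    #{S ∈ F | z ∈ S} ≤ #{S ∈ F | z ∈ S ∧ x ∈ S ∧ y ∈ S} + #{S ∈ F | z ∈ S ∧ x ∈ S ∧ y ∉ S}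
      + #{S ∈ F | z ∈ S ∧ y ∈ S ∧ x ∉ S} :=
  calc #{S ∈ F | z ∈ S}
      ≤ #({S ∈ F | z ∈ S ∧ x ∈ S ∧ y ∈ S} ∪ {S ∈ F | z ∈ S ∧ x ∈ S ∧ y ∉ S}
          ∪ {S ∈ F | z ∈ S ∧ y ∈ S ∧ x ∉ S}) := card_le_card fun S hS => by
        simp only [mem_union, mem_filter] at hS ⊢
        by_cases hyS : y ∈ S
        · by_cases hxS : x ∈ S
          · exact Or.inl (Or.inl ⟨hS.1, hS.2, hxS, hyS⟩)
          · exact Or.inr ⟨hS.1, hS.2, hyS, hxS⟩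
        · exact Or.inl (Or.inr ⟨hS.1, hS.2, (hcov S hS.1).resolve_right hyS, hyS⟩)
    _ ≤ _ := (card_union_le _ _).trans (Nat.add_le_add_right (card_union_le _ _) _)

variable [Fintype α]

theorem card_le_choose_of_forall_superset {G : Finset (Finset α)} {D : Finset α}
    (hG : ∀ S ∈ G, #S = k ∧ D ⊆ S) : #G ≤ (Fintype.card α - #D).choose (k - #D) := by
  simpa using card_le_choose_of_subset (subset_univ D) fun S hS => ⟨(hG S hS).1, (hG S hS).2,
    subset_univ S⟩

theorem exists_mul_card_filter_mem_le [Nonempty α] {F : Finset (Finset α)}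
    (hF : ∀ S ∈ F, #S = k) : ∃ z, Fintype.card α * #{S ∈ F | z ∈ S} ≤ k * #F := by
  have hsum : ∑ z, #{S ∈ F | z ∈ S} = ∑ S ∈ F, #S := by
    simpa [bipartiteAbove, bipartiteBelow] using
      sum_card_bipartiteAbove_eq_sum_card_bipartiteBelow (s := univ) (t := F) (fun z S => z ∈ S)
  obtain ⟨z, -, hz⟩ := exists_le_of_sum_le univ_nonempty
    (f := fun z => Fintype.card α * #{S ∈ F | z ∈ S}) (g := fun _ => k * #F) (by
      rw [← mul_sum, hsum, sum_congr rfl hF, sum_const, smul_eq_mul, sum_const, card_univ,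
        smul_eq_mul]; ring_nf; rfl)
  exact ⟨z, hz⟩

end Counting

section Families

variable {α : Type*} [Fintype α] [DecidableEq α] {k : ℕ} {F : Finset (Finset α)}

def IsCover (F : Finset (Finset α)) (C : Finset α) : Prop := ∀ S ∈ F, (S ∩ C).Nonempty

theorem exists_minimal_cover (hF : ∀ A ∈ F, #A = k) (hFi : ∀ A ∈ F, ∀ B ∈ F, (A ∩ B).Nonempty)
    (hnt : ∀ x : α, ∃ A ∈ F, x ∉ A) [Nonempty α] :
    ∃ C, IsCover F C ∧ (∀ V : Finset α, #V < #C → ¬IsCover F V) ∧ 2 ≤ #C ∧ #C ≤ k := by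
  classical
  obtain ⟨A₀, hA₀, -⟩ := hnt (Classical.arbitrary α)
  obtain ⟨C, hC, hCmin⟩ := exists_min_image {C ∈ univ | IsCover F C} card
    ⟨A₀, mem_filter.2 ⟨mem_univ _, fun S hS => hFi S hS A₀ hA₀⟩⟩
  rw [mem_filter] at hC
  refine ⟨C, hC.2, fun V hV hVC => (hCmin V (mem_filter.2 ⟨mem_univ _, hVC⟩)).not_gt hV,
    ?_, (hF A₀ hA₀).symm ▸ hCmin A₀ (mem_filter.2 ⟨mem_univ _, fun S hS => hFi S hS A₀ hA₀⟩)⟩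
  by_contra! hC1
  obtain ⟨x, hx⟩ := hC.2 A₀ hA₀
  obtain ⟨A, hA, hxA⟩ := hnt x
  obtain ⟨y, hy⟩ := hC.2 A hA
  rw [mem_inter] at hx hy
  exact hxA (card_le_one.1 (by omega) y hy.2 x hx.2 ▸ hy.1)

theorem card_filter_superset_le_pow (hF : ∀ A ∈ F, #A = k)
    (hFi : ∀ A ∈ F, ∀ B ∈ F, (A ∩ B).Nonempty) {t : ℕ}
    (hmin : ∀ V : Finset α, #V < t → ¬IsCover F V) :
    ∀ j (D : Finset α), #D + j = t →
      #{S ∈ F | D ⊆ S} ≤ k ^ j * (Fintype.card α - t).choose (k - t)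
  | 0, D, hD => by
    rw [pow_zero, one_mul, ← hD, add_zero]
    exact card_le_choose_of_forall_superset fun S hS => by
      rw [mem_filter] at hS; exact ⟨hF S hS.1, hS.2⟩
  | j + 1, D, hD => by
    obtain ⟨B, hB, hBD⟩ : ∃ B ∈ F, ¬(B ∩ D).Nonempty := by
      simpa [IsCover] using hmin D (by omega)
    rw [pow_succ', mul_assoc]
    refine card_le_mul_of_forall_inter_nonempty (hF B hB).le
      (fun S hS => hFi S (mem_filter.1 hS).1 B hB) fun w hw => ?_
    have hwD : w ∉ D := fun hwD => hBD ⟨w, mem_inter.2 ⟨hw, hwD⟩⟩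
    refine le_trans (card_le_card fun S hS => ?_) (card_filter_superset_le_pow hF hFi hmin j
      (insert w D) (by rw [card_insert_of_notMem hwD]; omega))
    simp only [mem_filter] at hS ⊢
    exact ⟨hS.1.1, insert_subset hS.2 hS.1.2⟩

theorem exists_card_filter_mem_le_of_four_le_card_cover (hk : 4 ≤ k)
    (hn : 4 * k ^ 2 ≤ Fintype.card α) (hF : ∀ A ∈ F, #A = k)
    (hFi : ∀ A ∈ F, ∀ B ∈ F, (A ∩ B).Nonempty) {C : Finset α} (hC : IsCover F C)
    (hmin : ∀ V : Finset α, #V < #C → ¬IsCover F V) (h4 : 4 ≤ #C) (hCk : #C ≤ k) :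
    ∃ z, #{S ∈ F | z ∈ S} ≤ k * (Fintype.card α - k - 2).choose (k - 3) := by
  set n := Fintype.card α
  have hn0 : 0 < n := by nlinarith
  have : Nonempty α := Fintype.card_pos_iff.1 hn0
  have hFC : #F ≤ #C * (k ^ (#C - 1) * (n - #C).choose (k - #C)) :=
    card_le_mul_of_forall_inter_nonempty le_rfl hC fun u _ =>
      le_trans (card_le_card fun S hS => by simpa using hS)
        (card_filter_superset_le_pow hF hFi hmin (#C - 1) {u} (by rw [card_singleton]; omega))
  have hF4 : #F ≤ 4 * k ^ 3 * (n - 4).choose (k - 4) := by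
    rw [← mul_assoc] at hFC
    exact hFC.trans (mul_pow_mul_choose_le hk hn h4 hCk)
  have hkey := three_mul_mul_choose_le hk hn
  obtain ⟨z, hz⟩ := exists_mul_card_filter_mem_le hF
  refine ⟨z, Nat.le_of_mul_le_mul_left ?_ hn0⟩
  calc n * #{S ∈ F | z ∈ S} ≤ k * #F := hz
    _ ≤ 4 * k ^ 2 * k * (k * (n - 4).choose (k - 4)) := by
        rw [show 4 * k ^ 2 * k * (k * (n - 4).choose (k - 4))
          = k * (4 * k ^ 3 * (n - 4).choose (k - 4)) by ring]
        exact Nat.mul_le_mul_left _ hF4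
    _ ≤ n * k * (n - k - 2).choose (k - 3) :=
        Nat.mul_le_mul (Nat.mul_le_mul_right _ hn) (le_trans (Nat.mul_le_mul_right _
          (by omega)) hkey)
    _ = n * (k * (n - k - 2).choose (k - 3)) := by ring

theorem exists_card_filter_mem_le_of_card_cover_eq_three (hk : 4 ≤ k)
    (hn : 4 * k ^ 2 ≤ Fintype.card α) (hF : ∀ A ∈ F, #A = k)
    (hFi : ∀ A ∈ F, ∀ B ∈ F, (A ∩ B).Nonempty) {C : Finset α} (hC : IsCover F C)
    (hmin : ∀ V : Finset α, #V < #C → ¬IsCover F V) (h3 : #C = 3) :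
    ∃ z, #{S ∈ F | z ∈ S} ≤ k * (Fintype.card α - k - 2).choose (k - 3) := by
  set n := Fintype.card α
  have hkk : 4 * (k * k) ≤ n := by nlinarith
  have hB : ∀ u w : α, ∃ B ∈ F, u ∉ B ∧ w ∉ B := fun u w => by
    obtain ⟨B, hB, hBuw⟩ : ∃ B ∈ F, ¬(B ∩ {u, w}).Nonempty := by
      simpa [IsCover] using hmin {u, w} ((card_le_two).trans_lt (by omega))
    exact ⟨B, hB, fun hu => hBuw ⟨u, by simp [hu]⟩, fun hw => hBuw ⟨w, by simp [hw]⟩⟩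
  choose B hBF hBu hBw using hB
  -- `z` avoids every set used in the branching below, so that the four points are distinct
  obtain ⟨z, -, hz⟩ := exists_mem_notMem_of_card_lt_card (s := C ∪ C.biUnion (fun u => B u u) ∪
    C.biUnion (fun u => (B u u).biUnion (B u))) (t := univ) (by
      have h1 := card_biUnion_le_card_mul C (fun u => B u u) k fun u _ => (hF _ (hBF u u)).le
      have h2 := card_biUnion_le_card_mul C (fun u => (B u u).biUnion (B u)) (k * k) fun u _ =>
        (card_biUnion_le_card_mul _ _ _ fun w _ => (hF _ (hBF u w)).le).trans_eq
          (by rw [hF _ (hBF u u)])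
      have h3' := card_union_le (C ∪ C.biUnion fun u => B u u)
        (C.biUnion fun u => (B u u).biUnion (B u))
      have h4 := card_union_le C (C.biUnion fun u => B u u)
      have : 3 * k + 4 ≤ k * k := by nlinarith
      rw [h3] at h1 h2
      rw [card_univ]
      omega)
  simp only [mem_union, mem_biUnion, not_or, not_exists, not_and] at hz
  obtain ⟨⟨hzC, hzB₁⟩, hzB₂⟩ := hz
  refine ⟨z, ?_⟩
  have hdeg : #{S ∈ F | z ∈ S} ≤ 3 * (k * (k * (n - 4).choose (k - 4))) := by
    refine card_le_mul_of_forall_inter_nonempty h3.le (fun S hS => hC S (mem_filter.1 hS).1)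
      fun u hu => ?_
    refine card_le_mul_of_forall_inter_nonempty (hF _ (hBF u u)).le
      (fun S hS => hFi S (by simp only [mem_filter] at hS; exact hS.1.1) _ (hBF u u)) fun w hw => ?_
    refine card_le_mul_of_forall_inter_nonempty (hF _ (hBF u w)).le
      (fun S hS => hFi S (by simp only [mem_filter] at hS; exact hS.1.1.1) _ (hBF u w))
      fun v hv => ?_
    have hcard : #{z, u, w, v} = 4 := card_eq_four.2 ⟨z, u, w, v, fun h => hzC (h ▸ hu),
      fun h => hzB₁ u hu (h ▸ hw), fun h => hzB₂ u hu w hw (h ▸ hv), fun h => hBu u u (h ▸ hw),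
      fun h => hBu u w (h ▸ hv), fun h => hBw u w (h ▸ hv), rfl⟩
    rw [← hcard]
    refine card_le_choose_of_forall_superset fun S hS => ?_
    simp only [mem_filter] at hS
    exact ⟨hF S hS.1.1.1.1, by simp [insert_subset_iff, hS.1.1.1.2, hS.1.1.2, hS.1.2, hS.2]⟩
  calc #{S ∈ F | z ∈ S} ≤ k * (3 * k * (n - 4).choose (k - 4)) := hdeg.trans_eq (by ring)
    _ ≤ k * (n - k - 2).choose (k - 3) := Nat.mul_le_mul_left _ (three_mul_mul_choose_le hk hn)

def sideKernel (F : Finset (Finset α)) (x y : α) : Finset α := {S ∈ F | y ∈ S ∧ x ∉ S}.inf id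

theorem mem_sideKernel {x y w : α} :
    w ∈ sideKernel F x y ↔ ∀ S ∈ F, y ∈ S → x ∉ S → w ∈ S := by
  simp [sideKernel, mem_inf]

theorem exists_mem_side_notMem {x y : α} {A₁ : Finset α} (hA₁ : A₁ ∈ F) (hyA₁ : y ∈ A₁)
    (hxA₁ : x ∉ A₁) (w : α) :
    ∃ A ∈ F, y ∈ A ∧ x ∉ A ∧ (w ∉ sideKernel F x y → w ∉ A) := by
  by_cases hw : w ∈ sideKernel F x y
  · exact ⟨A₁, hA₁, hyA₁, hxA₁, absurd hw⟩
  · simp only [mem_sideKernel, not_forall] at hw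
    obtain ⟨A, hA, hyA, hxA, hwA⟩ := hw
    exact ⟨A, hA, hyA, hxA, fun _ => hwA⟩

theorem card_filter_inter_nonempty_add_choose_le (hF : ∀ A ∈ F, #A = k) {x y z : α}
    (hzx : z ≠ x) {K : Finset α} (hyK : y ∈ K) (hxK : x ∉ K) (hzK : z ∉ K) :
    #{S ∈ {S ∈ F | z ∈ S ∧ x ∈ S ∧ y ∉ S} | (S ∩ K).Nonempty}
        + (Fintype.card α - 2 - #K).choose (k - 2)
      ≤ (Fintype.card α - 3).choose (k - 2) := by
  have hK1 : 1 ≤ #K := card_pos.2 ⟨y, hyK⟩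
  have h := card_add_choose_le_of_inter_nonempty
    (G := {S ∈ {S ∈ F | z ∈ S ∧ x ∈ S ∧ y ∉ S} | (S ∩ K).Nonempty})
    (D := {z, x}) (U := univ.erase y) (W := K.erase y) (k := k)
    (insert_subset (mem_erase.2 ⟨fun h => hzK (h ▸ hyK), mem_univ z⟩)
      (singleton_subset_iff.2 (mem_erase.2 ⟨fun h => hxK (h ▸ hyK), mem_univ x⟩)))
    (erase_subset_erase _ (subset_univ K))
    (disjoint_left.2 fun w hw hwD => by
      simp only [mem_insert, mem_singleton] at hwD
      rcases hwD with rfl | rfl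
      exacts [hzK (mem_of_mem_erase hw), hxK (mem_of_mem_erase hw)])
    (fun S hS => by
      simp only [mem_filter] at hS
      obtain ⟨⟨hSF, hzS, hxS, hyS⟩, w, hw⟩ := hS
      refine ⟨hF S hSF, by simp [insert_subset_iff, hzS, hxS], fun v hv => ?_, w, ?_⟩
      · exact mem_erase.2 ⟨fun h => hyS (h ▸ hv), mem_univ v⟩
      · rw [mem_inter] at hw ⊢
        exact ⟨hw.1, mem_erase.2 ⟨fun h => hyS (h ▸ hw.1), hw.2⟩⟩)
  rwa [card_erase_of_mem (mem_univ _), card_univ, card_pair hzx, card_erase_of_mem hyK,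
    show Fintype.card α - 1 - 2 - (#K - 1) = Fintype.card α - 2 - #K by omega,
    show Fintype.card α - 1 - 2 = Fintype.card α - 3 by omega] at h

theorem card_filter_mem_mem_notMem_add_choose_le (hF : ∀ A ∈ F, #A = k)
    (hFi : ∀ A ∈ F, ∀ B ∈ F, (A ∩ B).Nonempty) {x y z : α} (hzx : z ≠ x)
    {A₁ K : Finset α} (hA₁ : A₁ ∈ F) (hxA₁ : x ∉ A₁) (hzA₁ : z ∉ A₁) (hyK : y ∈ K)
    (hKA₁ : K ⊆ A₁) (hA₂ : ∀ w ∈ A₁ \ K, ∃ A ∈ F, y ∈ A ∧ w ∉ A ∧ x ∉ A ∧ z ∉ A) :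
    #{S ∈ F | z ∈ S ∧ x ∈ S ∧ y ∉ S} + (Fintype.card α - 2 - #K).choose (k - 2)
      ≤ (Fintype.card α - 3).choose (k - 2)
        + (k - #K) * ((k - 1) * (Fintype.card α - 4).choose (k - 4)) := by
  have hhit := card_filter_inter_nonempty_add_choose_le hF hzx hyK (fun h => hxA₁ (hKA₁ h))
    (fun h => hzA₁ (hKA₁ h))
  set n := Fintype.card α
  set G := {S ∈ F | z ∈ S ∧ x ∈ S ∧ y ∉ S}
  have hmiss : #{S ∈ G | ¬(S ∩ K).Nonempty} ≤ (k - #K) * ((k - 1) * (n - 4).choose (k - 4)) := by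
    refine card_le_mul_of_forall_inter_nonempty (B := A₁ \ K)
      (by rw [card_sdiff_of_subset hKA₁, hF _ hA₁]) (fun S hS => ?_) fun w hw => ?_
    · simp only [G, mem_filter] at hS
      obtain ⟨w, hw⟩ := hFi S hS.1.1 A₁ hA₁
      rw [mem_inter] at hw
      exact ⟨w, mem_inter.2 ⟨hw.1, mem_sdiff.2 ⟨hw.2, fun hwK =>
        hS.2 ⟨w, mem_inter.2 ⟨hw.1, hwK⟩⟩⟩⟩⟩
    obtain ⟨A, hA, hyA, hwA, hxA, hzA⟩ := hA₂ w hw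
    rw [mem_sdiff] at hw
    refine card_le_mul_of_forall_inter_nonempty (B := A.erase y)
      (by rw [card_erase_of_mem hyA, hF _ hA]) (fun S hS => ?_) fun v hv => ?_
    · simp only [G, mem_filter] at hS
      obtain ⟨v, hv⟩ := hFi S hS.1.1.1 A hA
      rw [mem_inter] at hv
      exact ⟨v, mem_inter.2 ⟨hv.1, mem_erase.2 ⟨fun h => hS.1.1.2.2.2 (h ▸ hv.1), hv.2⟩⟩⟩
    have hvA := mem_of_mem_erase hv
    have hcard : #{z, x, w, v} = 4 := card_eq_four.2 ⟨z, x, w, v, hzx,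
      fun h => hzA₁ (h ▸ hw.1), fun h => hzA (h ▸ hvA), fun h => hxA₁ (h ▸ hw.1),
      fun h => hxA (h ▸ hvA), fun h => hwA (h ▸ hvA), rfl⟩
    rw [← hcard]
    refine card_le_choose_of_forall_superset fun S hS => ?_
    simp only [G, mem_filter] at hS
    exact ⟨hF S hS.1.1.1.1, by simp [insert_subset_iff, hS.1.1.1.2.1, hS.1.1.1.2.2.1, hS.1.2, hS.2]⟩
  have := card_filter_add_card_filter_not (s := G) (fun S => (S ∩ K).Nonempty)
  omega

theorem card_filter_add_mul_le_of_two_le_card (hk : 4 ≤ k) (hn : 4 * k ^ 2 ≤ Fintype.card α)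
    (hF : ∀ A ∈ F, #A = k) {x y z : α} {K : Finset α} (hK : ∀ S ∈ F, y ∈ S → x ∉ S → K ⊆ S)
    (hxK : x ∉ K) (hzK : z ∉ K) (hzx : z ≠ x) (h2 : 2 ≤ #K) (hKk : #K ≤ k) :
    #{S ∈ F | z ∈ S ∧ y ∈ S ∧ x ∉ S}
        + (k - #K) * ((k - 1) * (Fintype.card α - 4).choose (k - 4))
      ≤ (k - #K) * (Fintype.card α - k - 2).choose (k - 3) := by
  have hzKS : ∀ S ∈ {S ∈ F | z ∈ S ∧ y ∈ S ∧ x ∉ S}, #S = k ∧ insert z K ⊆ S ∧ S ⊆ univ.erase x :=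
    fun S hS => by
      rw [mem_filter] at hS
      obtain ⟨hSF, hzS, hyS, hxS⟩ := hS
      exact ⟨hF S hSF, insert_subset hzS (hK S hSF hyS hxS),
        fun v hv => mem_erase.2 ⟨fun h => hxS (h ▸ hv), mem_univ v⟩⟩
  rcases hKk.eq_or_lt with hKk | hKk
  · -- a `k`-set cannot contain the `k + 1` points of `insert z K`
    have hempty : #{S ∈ F | z ∈ S ∧ y ∈ S ∧ x ∉ S} = 0 := card_eq_zero.2 <|
      eq_empty_of_forall_notMem fun S hS => by
        have h := card_le_card (hzKS S hS).2.1
        rw [card_insert_of_notMem hzK, (hzKS S hS).1] at h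
        omega
    simp [hempty, hKk]
  · have h := card_le_choose_of_subset
      (insert_subset (mem_erase.2 ⟨hzx, mem_univ z⟩) fun v hv =>
        mem_erase.2 ⟨fun h => hxK (h ▸ hv), mem_univ v⟩) hzKS
    rw [card_erase_of_mem (mem_univ _), card_univ, card_insert_of_notMem hzK,
      show Fintype.card α - 1 - (#K + 1) = Fintype.card α - 2 - #K by omega,
      show k - (#K + 1) = k - 1 - #K by omega] at h
    have := mul_mul_choose_add_choose_le hk hn h2 hKk
    omega

theorem exists_notMem_sides {x y : α} (hF : ∀ A ∈ F, #A = k)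
    (hn : 2 * (k * k) + 2 * k + 2 < Fintype.card α) {A₁ B₁ : Finset α} (hA₁ : A₁ ∈ F)
    (hyA₁ : y ∈ A₁) (hxA₁ : x ∉ A₁) (hB₁ : B₁ ∈ F) (hxB₁ : x ∈ B₁) (hyB₁ : y ∉ B₁) :
    ∃ z, z ≠ x ∧ z ≠ y ∧ z ∉ A₁ ∧ z ∉ B₁ ∧
      (∀ w ∈ A₁ \ sideKernel F x y, ∃ A ∈ F, y ∈ A ∧ w ∉ A ∧ x ∉ A ∧ z ∉ A) ∧
      (∀ w ∈ B₁ \ sideKernel F y x, ∃ B ∈ F, x ∈ B ∧ w ∉ B ∧ y ∉ B ∧ z ∉ B) := by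
  choose A₂ hA₂F hyA₂ hxA₂ hA₂w using exists_mem_side_notMem hA₁ hyA₁ hxA₁
  choose B₂ hB₂F hxB₂ hyB₂ hB₂w using exists_mem_side_notMem hB₁ hxB₁ hyB₁
  obtain ⟨z, -, hz⟩ := exists_mem_notMem_of_card_lt_card
    (s := {x, y} ∪ (A₁ ∪ A₁.biUnion A₂) ∪ (B₁ ∪ B₁.biUnion B₂)) (t := univ) (by
      have hA := card_biUnion_le_card_mul A₁ A₂ k fun w _ => (hF _ (hA₂F w)).le
      have hB := card_biUnion_le_card_mul B₁ B₂ k fun w _ => (hF _ (hB₂F w)).le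
      have h1 := card_union_le ({x, y} ∪ (A₁ ∪ A₁.biUnion A₂)) (B₁ ∪ B₁.biUnion B₂)
      have h2 := card_union_le {x, y} (A₁ ∪ A₁.biUnion A₂)
      have h3 := card_union_le A₁ (A₁.biUnion A₂)
      have h4 := card_union_le B₁ (B₁.biUnion B₂)
      have h5 : #{x, y} ≤ 2 := card_le_two
      rw [hF _ hA₁] at hA h3
      rw [hF _ hB₁] at hB h4
      rw [card_univ]
      omega)
  simp only [mem_union, mem_biUnion, mem_insert, mem_singleton, not_or, not_exists,
    not_and] at hz
  obtain ⟨⟨⟨hzx, hzy⟩, hzA₁, hzA₂⟩, hzB₁, hzB₂⟩ := hz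
  exact ⟨z, hzx, hzy, hzA₁, hzB₁,
    fun w hw => ⟨A₂ w, hA₂F w, hyA₂ w, hA₂w w (mem_sdiff.1 hw).2, hxA₂ w,
      hzA₂ w (mem_sdiff.1 hw).1⟩,
    fun w hw => ⟨B₂ w, hB₂F w, hxB₂ w, hB₂w w (mem_sdiff.1 hw).2, hyB₂ w,
      hzB₂ w (mem_sdiff.1 hw).1⟩⟩

theorem exists_card_filter_mem_add_choose_le_of_pair (hk : 4 ≤ k)
    (hn : 4 * k ^ 2 ≤ Fintype.card α) (hF : ∀ A ∈ F, #A = k)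
    (hFi : ∀ A ∈ F, ∀ B ∈ F, (A ∩ B).Nonempty) {x y : α} (hcov : ∀ S ∈ F, x ∈ S ∨ y ∈ S)
    {A₁ B₁ : Finset α} (hA₁ : A₁ ∈ F) (hyA₁ : y ∈ A₁) (hxA₁ : x ∉ A₁) (hB₁ : B₁ ∈ F)
    (hxB₁ : x ∈ B₁) (hyB₁ : y ∉ B₁)
    (hK : 2 ≤ #(sideKernel F x y) ∨ #(sideKernel F y x) ≤ 1) :
    ∃ z, #{S ∈ F | z ∈ S} + (Fintype.card α - k - 2).choose (k - 2)
      ≤ (Fintype.card α - 2).choose (k - 2) := by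
  obtain ⟨z, hzx, hzy, hzA₁, hzB₁, hA₂, hB₂⟩ :=
    exists_notMem_sides hF (by nlinarith) hA₁ hyA₁ hxA₁ hB₁ hxB₁ hyB₁
  set Ky := sideKernel F x y
  have hyKy : y ∈ Ky := mem_sideKernel.2 fun _ _ hyS _ => hyS
  have hKyA₁ : Ky ⊆ A₁ := fun w hw => mem_sideKernel.1 hw A₁ hA₁ hyA₁ hxA₁
  have hKyk : #Ky ≤ k := (card_le_card hKyA₁).trans (hF A₁ hA₁).le
  have ha : #{S ∈ F | z ∈ S ∧ x ∈ S ∧ y ∈ S} ≤ (Fintype.card α - 3).choose (k - 3) := by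
    have hcard : #{z, x, y} = 3 :=
      card_eq_three.2 ⟨z, x, y, hzx, hzy, fun h => hxA₁ (h ▸ hyA₁), rfl⟩
    rw [← hcard]
    refine card_le_choose_of_forall_superset fun S hS => ?_
    rw [mem_filter] at hS
    exact ⟨hF S hS.1, by simp [insert_subset_iff, hS.2]⟩
  have hb := card_filter_mem_mem_notMem_add_choose_le hF hFi hzx hA₁ hxA₁ hzA₁ hyKy hKyA₁ hA₂
  have hc : #{S ∈ F | z ∈ S ∧ y ∈ S ∧ x ∉ S}
        + (k - #Ky) * ((k - 1) * (Fintype.card α - 4).choose (k - 4))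
      ≤ (k - #Ky) * (Fintype.card α - k - 2).choose (k - 3) := by
    by_cases h2 : 2 ≤ #Ky
    · exact card_filter_add_mul_le_of_two_le_card hk hn hF
        (fun S hS hyS hxS w hw => mem_sideKernel.1 hw S hS hyS hxS) (fun h => hxA₁ (hKyA₁ h))
        (fun h => hzA₁ (hKyA₁ h)) hzx h2 hKyk
    -- both side kernels are trivial: bound the `y`-side like the `x`-side
    have hxKx : x ∈ sideKernel F y x := mem_sideKernel.2 fun _ _ hxS _ => hxS
    have hKxB₁ : sideKernel F y x ⊆ B₁ := fun w hw => mem_sideKernel.1 hw B₁ hB₁ hxB₁ hyB₁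
    have hKy1 : #Ky = 1 := by
      have := card_pos.2 ⟨y, hyKy⟩
      omega
    have hKx1 : #(sideKernel F y x) = 1 := by
      have := card_pos.2 ⟨x, hxKx⟩
      have := hK.resolve_left h2
      omega
    have hc' := card_filter_mem_mem_notMem_add_choose_le hF hFi hzy hB₁ hyB₁ hzB₁ hxKx hKxB₁ hB₂
    rw [hKx1, show Fintype.card α - 2 - 1 = Fintype.card α - 3 by omega] at hc'
    have := mul_mul_choose_add_mul_mul_choose_le hk hn
    rw [hKy1]
    omega
  exact ⟨z, (Nat.add_le_add_right (card_filter_mem_le_add_add hcov z) _).trans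
    (add_add_add_choose_le hk hn hKyk ha hb hc)⟩

theorem exists_card_filter_mem_add_choose_le_of_card_cover_eq_two (hk : 4 ≤ k)
    (hn : 4 * k ^ 2 ≤ Fintype.card α) (hF : ∀ A ∈ F, #A = k)
    (hFi : ∀ A ∈ F, ∀ B ∈ F, (A ∩ B).Nonempty) {C : Finset α} (hC : IsCover F C)
    (hmin : ∀ V : Finset α, #V < #C → ¬IsCover F V) (h2 : #C = 2) :
    ∃ z, #{S ∈ F | z ∈ S} + (Fintype.card α - k - 2).choose (k - 2)
      ≤ (Fintype.card α - 2).choose (k - 2) := by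
  obtain ⟨x, y, -, rfl⟩ := card_eq_two.1 h2
  have hcov : ∀ S ∈ F, x ∈ S ∨ y ∈ S := fun S hS => by
    obtain ⟨w, hw⟩ := hC S hS
    simp only [mem_inter, mem_insert, mem_singleton] at hw
    rcases hw with ⟨hwS, rfl | rfl⟩
    exacts [Or.inl hwS, Or.inr hwS]
  have hout : ∀ u : α, ∃ S ∈ F, u ∉ S := fun u => by
    obtain ⟨S, hS, hSu⟩ : ∃ S ∈ F, ¬(S ∩ {u}).Nonempty := by
      simpa only [IsCover, not_forall, exists_prop] using
        hmin {u} (by rw [card_singleton, h2]; omega)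
    exact ⟨S, hS, fun hu => hSu ⟨u, mem_inter.2 ⟨hu, mem_singleton_self u⟩⟩⟩
  obtain ⟨A₁, hA₁, hxA₁⟩ := hout x
  obtain ⟨B₁, hB₁, hyB₁⟩ := hout y
  have hyA₁ := (hcov A₁ hA₁).resolve_left hxA₁
  have hxB₁ := (hcov B₁ hB₁).resolve_right hyB₁
  by_cases hK : 2 ≤ #(sideKernel F x y) ∨ #(sideKernel F y x) ≤ 1
  · exact exists_card_filter_mem_add_choose_le_of_pair hk hn hF hFi hcov hA₁ hyA₁ hxA₁ hB₁
      hxB₁ hyB₁ hK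
  · exact exists_card_filter_mem_add_choose_le_of_pair hk hn hF hFi
      (fun S hS => (hcov S hS).symm) hB₁ hxB₁ hyB₁ hA₁ hyA₁ hxA₁ (by omega)

end Families

end HiltonMilner

/-- Degree version of the Hilton--Milner theorem (Theorem 1.1):
if `k ≥ 4`, `n ≥ 30k²` for `k ∈ {4,5}` and `n ≥ 4k²` for `k ≥ 6`, and `F` is a
non-trivial intersecting family of `k`-subsets of `[n]`, then
`δ(F) ≤ C(n-2, k-2) - C(n-k-2, k-2)`. -/
theorem degree_hilton_milner (n k : ℕ) (hk : 4 ≤ k)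
    (hn45 : k ≤ 5 → 30 * k ^ 2 ≤ n) (hn6 : 6 ≤ k → 4 * k ^ 2 ≤ n)
    (F : Finset (Finset (Fin n)))
    (huniform : ∀ A ∈ F, A.card = k)
    (hintersecting : ∀ A ∈ F, ∀ B ∈ F, (A ∩ B).Nonempty)
    (hnontrivial : ¬ ∃ x : Fin n, ∀ A ∈ F, x ∈ A) :
    ∃ x : Fin n, (F.filter (fun A => x ∈ A)).card ≤
      Nat.choose (n - 2) (k - 2) - Nat.choose (n - k - 2) (k - 2) := by
  have hn : 4 * k ^ 2 ≤ n := by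
    rcases le_or_gt k 5 with h | h
    · linarith [hn45 h]
    · exact hn6 h
  have hα : 4 * k ^ 2 ≤ Fintype.card (Fin n) := by rwa [Fintype.card_fin]
  have : Nonempty (Fin n) := ⟨⟨0, by nlinarith⟩⟩
  simp only [not_exists, not_forall, exists_prop] at hnontrivial
  obtain ⟨C, hC, hmin, h2, hCk⟩ :=
    HiltonMilner.exists_minimal_cover huniform hintersecting hnontrivial
  rcases (by omega : C.card = 2 ∨ C.card = 3 ∨ 4 ≤ C.card) with h | h | h
  · obtain ⟨z, hz⟩ := HiltonMilner.exists_card_filter_mem_add_choose_le_of_card_cover_eq_two hk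
      hα huniform hintersecting hC hmin h
    exact ⟨z, Nat.le_sub_of_add_le (by simpa using hz)⟩
  · obtain ⟨z, hz⟩ := HiltonMilner.exists_card_filter_mem_le_of_card_cover_eq_three hk hα
      huniform hintersecting hC hmin h
    exact ⟨z, HiltonMilner.le_choose_sub_choose_of_le_mul hk hn (by simpa using hz)⟩
  · obtain ⟨z, hz⟩ := HiltonMilner.exists_card_filter_mem_le_of_four_le_card_cover hk hα
      huniform hintersecting hC hmin h hCk
    exact ⟨z, HiltonMilner.le_choose_sub_choose_of_le_mul hk hn (by simpa using hz)⟩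
end

section
/- If n ≥ 7 and F is a non-trivial intersecting family of 3-element subsets of [n], then δ(F) ≤ 3. -/
/-!
Suppose every vertex has degree at least 4. The link `F.memberSubfamily y` of a vertex `y` then
consists of at least four pairs, and each of them meets every member of `F` avoiding `y`.

If a subfamily `𝒯 ⊆ F` without common point avoids two vertices `y₁ ≠ y₂`, the links of `y₁`
and `y₂` are cross-intersecting families of transversals of `𝒯`. Since the link of `y₂` has
four members, the link of `y₁` cannot contain two disjoint pairs (the four pairs meeting both
would all lie in the link of `y₂`, leaving only those two for the link of `y₁`). So the link of
`y₁` is intersecting: a triangle, or a star at some `v`, whose pairs then run from `v` into a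
member of `𝒯` avoiding `v`. Either way it has at most three pairs.

It remains to find such a `𝒯` supported on five points. If distinct members always share two
points, a vertex outside two distinct members has degree at most 1. Otherwise `A ∩ B = {z}`
and some `C ∈ F` avoids `z`. If `C ⊆ A ∪ B`, take `𝒯 = {A, B, C}`. If not, write
`A = {z, a, p}`, `B = {z, b, q}`, `C = {a, b, c}` and let `y` lie outside these six points.
The link of `y` has four of the six transversals of `{A, B, C}`, which fall into three disjoint
couples `P, Q` with `P ∪ Q` containing `A`, `B` or `C` respectively; so it contains a whole
couple, and `{y} ∪ P`, `{y} ∪ Q` together with that member of `{A, B, C}` do the job.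
-/

open Finset

lemma exists_notMem_of_card_lt {α : Type*} [Fintype α] {s : Finset α}
    (h : #s < Fintype.card α) : ∃ x, x ∉ s := by
  simpa [eq_univ_iff_forall] using (card_lt_iff_ne_univ s).1 h

variable {α : Type*} [DecidableEq α]

lemma exists_eq_pair_of_mem {P : Finset α} {s : α} (hP : #P = 2) (hs : s ∈ P) :
    ∃ t, t ≠ s ∧ P = {s, t} := by
  obtain ⟨t, ht⟩ := card_eq_one.1 (by rw [card_erase_of_mem hs, hP] : #(P.erase s) = 1)
  refine ⟨t, fun hts => ?_, by rw [← insert_erase hs, ht]⟩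
  simpa [hts] using (ht ▸ mem_singleton_self t : t ∈ P.erase s)

lemma eq_pair_of_mem {P : Finset α} {s t : α} (hP : #P = 2) (hs : s ∈ P) (ht : t ∈ P)
    (hst : s ≠ t) : P = {s, t} :=
  (eq_of_subset_of_card_le (insert_subset hs (singleton_subset_iff.2 ht))
    (by rw [hP, card_pair hst])).symm

lemma exists_eq_triple_of_mem {A : Finset α} {s t : α} (hA : #A = 3) (hs : s ∈ A) (ht : t ∈ A)
    (hst : s ≠ t) : ∃ u, u ≠ s ∧ u ≠ t ∧ A = {s, t, u} := by
  obtain ⟨u, hut, hu⟩ := exists_eq_pair_of_mem (by rw [card_erase_of_mem hs, hA] : #(A.erase s) = 2)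
    (mem_erase.2 ⟨hst.symm, ht⟩)
  refine ⟨u, fun hus => ?_, hut, by rw [← insert_erase hs, hu]⟩
  simpa [hus] using (hu ▸ mem_insert_of_mem (mem_singleton_self u) : u ∈ A.erase s)

lemma card_inter_eq_two {A B : Finset α} (hA : #A = 3) (hB : #B = 3) (hAB : A ≠ B)
    (hne : (A ∩ B).Nonempty) (hone : #(A ∩ B) ≠ 1) : #(A ∩ B) = 2 := by
  have hthree : #(A ∩ B) ≠ 3 := fun h => hAB <|
    (eq_of_subset_of_card_le inter_subset_left (by rw [h, hA])).symm.trans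
      (eq_of_subset_of_card_le inter_subset_right (by rw [h, hB]))
  have := card_pos.2 hne
  have := hA ▸ card_le_card (inter_subset_left (s₁ := A) (s₂ := B))
  omega

lemma erase_eq_inter_of_card_inter_eq_two {A B E : Finset α} {w : α} (hE : #E = 3) (hwE : w ∈ E)
    (hwA : w ∉ A) (hwB : w ∉ B) (hEA : #(E ∩ A) = 2) (hEB : #(E ∩ B) = 2)
    (hAB : #(A ∩ B) = 2) : E.erase w = A ∩ B := by
  have hside : ∀ D, w ∉ D → #(E ∩ D) = 2 → E ∩ D = E.erase w := fun D hwD hED =>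
    eq_of_subset_of_card_le
      (fun v hv => mem_erase.2 ⟨fun h => hwD (h ▸ (mem_inter.1 hv).2), (mem_inter.1 hv).1⟩)
      (by rw [card_erase_of_mem hwE, hE, hED])
  refine eq_of_subset_of_card_le (fun v hv => mem_inter.2 ⟨?_, ?_⟩) ?_
  · exact (mem_inter.1 ((hside A hwA hEA).symm ▸ hv)).2
  · exact (mem_inter.1 ((hside B hwB hEB).symm ▸ hv)).2
  · rw [hAB, card_erase_of_mem hwE, hE]

lemma mem_of_pair_inter_nonempty {s t : α} {D : Finset α} (hs : s ∉ D)
    (h : ({s, t} ∩ D).Nonempty) : t ∈ D := by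
  obtain ⟨w, hw⟩ := h
  simp only [mem_inter, mem_insert, mem_singleton] at hw
  obtain ⟨rfl | rfl, hwD⟩ := hw
  exacts [absurd hwD hs, hwD]

lemma notMem_of_forall_inter_nonempty {𝒯 : Finset (Finset α)} (h𝒯 : ∀ v, ∃ D ∈ 𝒯, v ∉ D)
    {P : Finset α} (hP : #P = 2) (hmeet : ∀ D ∈ 𝒯, (P ∩ D).Nonempty) {y : α}
    (hy : ∀ D ∈ 𝒯, y ∉ D) : y ∉ P := by
  intro hyP
  obtain ⟨t, -, rfl⟩ := exists_eq_pair_of_mem hP hyP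
  obtain ⟨D, hD, htD⟩ := h𝒯 t
  exact htD (mem_of_pair_inter_nonempty (hy D hD) (hmeet D hD))

lemma card_le_card_of_forall_mem {L : Finset (Finset α)} {v : α} {D : Finset α}
    (hL : ∀ P ∈ L, #P = 2) (hv : ∀ P ∈ L, v ∈ P) (hvD : v ∉ D)
    (hmeet : ∀ P ∈ L, (P ∩ D).Nonempty) : #L ≤ #D :=
  calc #L ≤ #(D.image fun t => ({v, t} : Finset α)) := card_le_card fun P hP => by
        obtain ⟨t, -, rfl⟩ := exists_eq_pair_of_mem (hL P hP) (hv P hP)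
        exact mem_image_of_mem _ (mem_of_pair_inter_nonempty hvD (hmeet _ hP))
    _ ≤ #D := card_image_le

lemma card_le_three_of_intersecting {L : Finset (Finset α)} (hL : ∀ P ∈ L, #P = 2)
    (hint : ∀ P ∈ L, ∀ Q ∈ L, (P ∩ Q).Nonempty) (hfree : ∀ v, ∃ P ∈ L, v ∉ P) : #L ≤ 3 := by
  obtain rfl | ⟨P, hP⟩ := L.eq_empty_or_nonempty
  · simp
  obtain ⟨x, y, hxy, rfl⟩ := card_eq_two.1 (hL P hP)
  obtain ⟨Q, hQ, hxQ⟩ := hfree x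
  obtain ⟨R, hR, hyR⟩ := hfree y
  have hyQ : y ∈ Q := mem_of_pair_inter_nonempty hxQ (hint _ hP Q hQ)
  obtain ⟨u, huy, rfl⟩ := exists_eq_pair_of_mem (hL Q hQ) hyQ
  have hxu : x ≠ u := by rintro rfl; simp at hxQ
  have hxR : x ∈ R := mem_of_pair_inter_nonempty hyR (by rw [pair_comm]; exact hint _ hP R hR)
  have huR : u ∈ R := mem_of_pair_inter_nonempty hyR (hint _ hQ R hR)
  obtain rfl := eq_pair_of_mem (hL R hR) hxR huR hxu
  have htri : ∀ w, ∃ D ∈ ({{x, y}, {y, u}, {x, u}} : Finset (Finset α)), w ∉ D := fun w => by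
    by_cases hwx : w = x
    · exact ⟨{y, u}, by simp, hwx ▸ hxQ⟩
    by_cases hwy : w = y
    · exact ⟨{x, u}, by simp, hwy ▸ hyR⟩
    exact ⟨{x, y}, by simp, by simp [hwx, hwy]⟩
  have hsub : L ⊆ ({x, y, u} : Finset α).powersetCard 2 := by
    intro S hS
    refine mem_powersetCard.2 ⟨fun v hvS => ?_, hL S hS⟩
    by_contra hv
    refine notMem_of_forall_inter_nonempty htri (hL S hS) (fun D hD => hint S hS D ?_)
      (by simp at hv ⊢; tauto) hvS
    simp only [mem_insert, mem_singleton] at hD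
    rcases hD with rfl | rfl | rfl <;> assumption
  calc #L ≤ (#({x, y, u} : Finset α)).choose 2 := card_powersetCard 2 _ ▸ card_le_card hsub
    _ ≤ Nat.choose 3 2 := Nat.choose_le_choose 2 card_le_three
    _ = 3 := rfl

lemma card_le_three_of_intersecting_of_transversal
    {𝒯 L : Finset (Finset α)} (h𝒯 : ∀ D ∈ 𝒯, #D = 3) (h𝒯' : ∀ v, ∃ D ∈ 𝒯, v ∉ D)
    (hL : ∀ P ∈ L, #P = 2) (hint : ∀ P ∈ L, ∀ Q ∈ L, (P ∩ Q).Nonempty)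
    (hmeet : ∀ P ∈ L, ∀ D ∈ 𝒯, (P ∩ D).Nonempty) : #L ≤ 3 := by
  by_cases hstar : ∃ v, ∀ P ∈ L, v ∈ P
  · obtain ⟨v, hv⟩ := hstar
    obtain ⟨D, hD, hvD⟩ := h𝒯' v
    exact h𝒯 D hD ▸ card_le_card_of_forall_mem hL hv hvD fun P hP => hmeet P hP D hD
  · push Not at hstar
    exact card_le_three_of_intersecting hL hint hstar

lemma subset_pair_of_cross_intersecting {L₁ L₂ : Finset (Finset α)}
    (hL₁ : ∀ P ∈ L₁, #P = 2) (hL₂ : ∀ Q ∈ L₂, #Q = 2)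
    (hcross : ∀ P ∈ L₁, ∀ Q ∈ L₂, (P ∩ Q).Nonempty) (hL₂card : 4 ≤ #L₂)
    {P Q : Finset α} (hP : P ∈ L₁) (hQ : Q ∈ L₁) (hPQ : Disjoint P Q) : L₁ ⊆ {P, Q} := by
  set K := (P ×ˢ Q).image fun pq => ({pq.1, pq.2} : Finset α)
  have hK : L₂ = K := by
    refine eq_of_subset_of_card_le (fun R hR => ?_) ?_
    · obtain ⟨p, hp⟩ := hcross P hP R hR
      obtain ⟨q, hq⟩ := hcross Q hQ R hR
      rw [mem_inter] at hp hq
      have hpq : p ≠ q := fun h => disjoint_left.1 hPQ hp.1 (h ▸ hq.1)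
      exact mem_image.2 ⟨(p, q), mem_product.2 ⟨hp.1, hq.1⟩,
        (eq_pair_of_mem (hL₂ R hR) hp.2 hq.2 hpq).symm⟩
    · calc #K ≤ #(P ×ˢ Q) := card_image_le
        _ = 4 := by rw [card_product, hL₁ P hP, hL₁ Q hQ]
        _ ≤ #L₂ := hL₂card
  intro S hS
  by_contra hSPQ
  simp only [mem_insert, mem_singleton, not_or] at hSPQ
  have hnot : ∀ T ∈ L₁, S ≠ T → ∃ t ∈ T, t ∉ S := fun T hT hST =>
    not_subset.1 fun hTS => hST (eq_of_subset_of_card_le hTS (by rw [hL₁ S hS, hL₁ T hT])).symm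
  obtain ⟨p, hp, hpS⟩ := hnot P hP hSPQ.1
  obtain ⟨q, hq, hqS⟩ := hnot Q hQ hSPQ.2
  have hpq : ({p, q} : Finset α) ∈ L₂ := hK ▸ mem_image.2 ⟨(p, q), mem_product.2 ⟨hp, hq⟩, rfl⟩
  obtain ⟨w, hw⟩ := hcross S hS _ hpq
  simp only [mem_inter, mem_insert, mem_singleton] at hw
  obtain ⟨hwS, rfl | rfl⟩ := hw
  exacts [hpS hwS, hqS hwS]

lemma subset_or_subset_or_subset_of_subset_union {β : Type*} [DecidableEq β]
    {L M₁ M₂ M₃ : Finset β} (hL : L ⊆ M₁ ∪ M₂ ∪ M₃) (h₁ : #M₁ ≤ 2) (h₂ : #M₂ ≤ 2)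
    (h₃ : #M₃ ≤ 2) (hLcard : 4 ≤ #L) : M₁ ⊆ L ∨ M₂ ⊆ L ∨ M₃ ⊆ L := by
  by_contra! h
  have key : ∀ M : Finset β, #M ≤ 2 → ¬M ⊆ L → #(L ∩ M) ≤ 1 := fun M hM hML => by
    have := card_lt_card (inter_subset_right.ssubset_of_not_subset
      fun hM' => hML (hM'.trans inter_subset_left))
    omega
  have hcard := card_union_le (L ∩ M₁ ∪ L ∩ M₂) (L ∩ M₃)
  rw [← inter_union_distrib_left, ← inter_union_distrib_left, inter_eq_left.2 hL] at hcard
  have h₁₂ := card_union_le (L ∩ M₁) (L ∩ M₂)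
  rw [← inter_union_distrib_left] at h₁₂
  have := key M₁ h₁ h.1
  have := key M₂ h₂ h.2.1
  have := key M₃ h₃ h.2.2
  omega

lemma mem_of_transversal_triangle {z a p b q c : α} (h : [z, a, p, b, q, c].Nodup)
    {P : Finset α} (hP : #P = 2) (hA : (P ∩ {z, a, p}).Nonempty)
    (hB : (P ∩ {z, b, q}).Nonempty) (hC : (P ∩ {a, b, c}).Nonempty) :
    P ∈ ({{z, a}, {b, p}} ∪ {{z, b}, {a, q}} ∪ {{a, b}, {z, c}} : Finset (Finset α)) := by
  simp only [List.nodup_cons, List.mem_cons, List.not_mem_nil, List.nodup_nil, not_or] at h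
  obtain ⟨w, hw⟩ := hC
  obtain ⟨hwP, hwC⟩ := mem_inter.1 hw
  obtain ⟨t, -, rfl⟩ := exists_eq_pair_of_mem hP hwP
  simp only [mem_insert, mem_singleton] at hwC
  rcases hwC with rfl | rfl | rfl
  · have ht := mem_of_pair_inter_nonempty (by simp; tauto) hB
    simp only [mem_insert, mem_singleton] at ht
    rcases ht with rfl | rfl | rfl <;> simp [pair_comm]
  · have ht := mem_of_pair_inter_nonempty (by simp; tauto) hA
    simp only [mem_insert, mem_singleton] at ht
    rcases ht with rfl | rfl | rfl <;> simp [pair_comm]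
  · have htA := mem_of_pair_inter_nonempty (by simp; tauto) hA
    have htB := mem_of_pair_inter_nonempty (by simp; tauto) hB
    simp only [mem_insert, mem_singleton] at htA htB
    obtain rfl : t = z := by grind
    simp [pair_comm]

def degree (F : Finset (Finset α)) (x : α) : ℕ := #{A ∈ F | x ∈ A}

lemma card_memberSubfamily_eq_degree (F : Finset (Finset α)) (y : α) :
    #(F.memberSubfamily y) = degree F y :=
  card_image_of_injOn fun A hA B hB hAB => by
    rw [← insert_erase (mem_filter.1 hA).2, ← insert_erase (mem_filter.1 hB).2]
    exact congrArg (insert y) hAB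

section Degree

variable {F : Finset (Finset α)} {y : α}

lemma card_eq_two_of_mem_memberSubfamily (hsize : ∀ A ∈ F, #A = 3) {P : Finset α}
    (hP : P ∈ F.memberSubfamily y) : #P = 2 := by
  obtain ⟨hPF, hyP⟩ := mem_memberSubfamily.1 hP
  have := hsize _ hPF
  rw [card_insert_of_notMem hyP] at this
  omega

lemma inter_nonempty_of_mem_memberSubfamily (hinter : ∀ A ∈ F, ∀ B ∈ F, (A ∩ B).Nonempty)
    {P D : Finset α} (hP : P ∈ F.memberSubfamily y) (hD : D ∈ F) (hyD : y ∉ D) :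
    (P ∩ D).Nonempty := by
  obtain ⟨w, hw⟩ := hinter _ (mem_memberSubfamily.1 hP).1 D hD
  rw [mem_inter, mem_insert] at hw
  obtain ⟨rfl | hwP, hwD⟩ := hw
  exacts [absurd hwD hyD, ⟨w, mem_inter.2 ⟨hwP, hwD⟩⟩]

lemma degree_le_three_or_degree_le_three (hsize : ∀ A ∈ F, #A = 3)
    (hinter : ∀ A ∈ F, ∀ B ∈ F, (A ∩ B).Nonempty) {𝒯 : Finset (Finset α)} (h𝒯F : 𝒯 ⊆ F)
    (h𝒯 : ∀ v, ∃ D ∈ 𝒯, v ∉ D) {y₁ y₂ : α} (hy : y₁ ≠ y₂) (hy₁ : ∀ D ∈ 𝒯, y₁ ∉ D)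
    (hy₂ : ∀ D ∈ 𝒯, y₂ ∉ D) : degree F y₁ ≤ 3 ∨ degree F y₂ ≤ 3 := by
  by_contra! h
  rw [← card_memberSubfamily_eq_degree, ← card_memberSubfamily_eq_degree] at h
  have hpair : ∀ y, ∀ P ∈ F.memberSubfamily y, #P = 2 := fun _ _ =>
    card_eq_two_of_mem_memberSubfamily hsize
  have hmeet : ∀ y, (∀ D ∈ 𝒯, y ∉ D) → ∀ P ∈ F.memberSubfamily y, ∀ D ∈ 𝒯, (P ∩ D).Nonempty :=
    fun y hy P hP D hD => inter_nonempty_of_mem_memberSubfamily hinter hP (h𝒯F hD) (hy D hD)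
  have hcross : ∀ P ∈ F.memberSubfamily y₁, ∀ Q ∈ F.memberSubfamily y₂, (P ∩ Q).Nonempty := by
    intro P hP Q hQ
    have hy₂P := notMem_of_forall_inter_nonempty h𝒯 (hpair _ P hP) (hmeet _ hy₁ P hP) hy₂
    have hy₁Q := notMem_of_forall_inter_nonempty h𝒯 (hpair _ Q hQ) (hmeet _ hy₂ Q hQ) hy₁
    obtain ⟨w, hw⟩ := hinter _ (mem_memberSubfamily.1 hP).1 _ (mem_memberSubfamily.1 hQ).1
    simp only [mem_inter, mem_insert] at hw
    obtain ⟨rfl | hwP, rfl | hwQ⟩ := hw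
    · exact absurd rfl hy
    · exact absurd hwQ hy₁Q
    · exact absurd hwP hy₂P
    · exact ⟨w, mem_inter.2 ⟨hwP, hwQ⟩⟩
  have hint : ∀ P ∈ F.memberSubfamily y₁, ∀ Q ∈ F.memberSubfamily y₁, (P ∩ Q).Nonempty := by
    intro P hP Q hQ
    by_contra hPQ
    rw [not_nonempty_iff_eq_empty, ← disjoint_iff_inter_eq_empty] at hPQ
    have := card_le_card
      (subset_pair_of_cross_intersecting (hpair y₁) (hpair y₂) hcross h.2 hP hQ hPQ)
    have := card_le_two (a := P) (b := Q)
    omega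
  have := card_le_three_of_intersecting_of_transversal (fun D hD => hsize D (h𝒯F hD)) h𝒯
    (hpair y₁) hint (hmeet y₁ hy₁)
  omega

lemma exists_degree_le_three_of_forall_subset [Fintype α] (hsize : ∀ A ∈ F, #A = 3)
    (hinter : ∀ A ∈ F, ∀ B ∈ F, (A ∩ B).Nonempty) {𝒯 : Finset (Finset α)} (h𝒯F : 𝒯 ⊆ F)
    (h𝒯 : ∀ v, ∃ D ∈ 𝒯, v ∉ D) {U : Finset α} (hU : ∀ D ∈ 𝒯, D ⊆ U)
    (hUcard : #U + 2 ≤ Fintype.card α) : ∃ x, degree F x ≤ 3 := by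
  obtain ⟨y₁, hy₁, y₂, hy₂, hy⟩ := one_lt_card.1 (by rw [card_compl]; omega : 1 < #Uᶜ)
  rw [mem_compl] at hy₁ hy₂
  exact (degree_le_three_or_degree_le_three hsize hinter h𝒯F h𝒯 hy
    (fun D hD h => hy₁ (hU D hD h)) (fun D hD h => hy₂ (hU D hD h))).elim (⟨y₁, ·⟩) (⟨y₂, ·⟩)

lemma exists_degree_le_three_of_disjoint_mem_memberSubfamily [Fintype α] (hsize : ∀ A ∈ F, #A = 3)
    (hinter : ∀ A ∈ F, ∀ B ∈ F, (A ∩ B).Nonempty) (hn : 7 ≤ Fintype.card α) {y : α}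
    {P Q D : Finset α} (hP : P ∈ F.memberSubfamily y) (hQ : Q ∈ F.memberSubfamily y)
    (hPQ : Disjoint P Q) (hD : D ∈ F) (hyD : y ∉ D) (hDPQ : D ⊆ P ∪ Q) :
    ∃ x, degree F x ≤ 3 := by
  have hP₂ := card_eq_two_of_mem_memberSubfamily hsize hP
  have hQ₂ := card_eq_two_of_mem_memberSubfamily hsize hQ
  rw [mem_memberSubfamily] at hP hQ
  refine exists_degree_le_three_of_forall_subset (𝒯 := {insert y P, insert y Q, D})
    (U := insert y (P ∪ Q)) hsize hinter ?_ (fun v => ?_) ?_ ?_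
  · simp [insert_subset_iff, hP.1, hQ.1, hD]
  · by_cases hvy : v = y
    · exact ⟨D, by simp, hvy ▸ hyD⟩
    · by_cases hvP : v ∈ P
      · exact ⟨insert y Q, by simp, by simp [hvy, disjoint_left.1 hPQ hvP]⟩
      · exact ⟨insert y P, by simp, by simp [hvy, hvP]⟩
  · simp only [mem_insert, mem_singleton, forall_eq_or_imp, forall_eq]
    exact ⟨insert_subset_insert _ subset_union_left, insert_subset_insert _ subset_union_right,
      hDPQ.trans (subset_insert _ _)⟩
  · have := card_insert_le y (P ∪ Q)
    have := card_union_le P Q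
    omega

lemma exists_degree_le_three_of_triangle [Fintype α] (hsize : ∀ A ∈ F, #A = 3)
    (hinter : ∀ A ∈ F, ∀ B ∈ F, (A ∩ B).Nonempty) (hn : 7 ≤ Fintype.card α) {z a p b q c : α}
    (hdist : [z, a, p, b, q, c].Nodup) (hA : {z, a, p} ∈ F) (hB : {z, b, q} ∈ F)
    (hC : {a, b, c} ∈ F) : ∃ x, degree F x ≤ 3 := by
  obtain ⟨y, hy⟩ := exists_notMem_of_card_lt (s := {z, a, p, b, q, c})
    (card_le_six.trans_lt (by omega))
  by_cases hdeg : degree F y ≤ 3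
  · exact ⟨y, hdeg⟩
  simp only [mem_insert, mem_singleton, not_or] at hy
  have hsix : F.memberSubfamily y ⊆ {{z, a}, {b, p}} ∪ {{z, b}, {a, q}} ∪ {{a, b}, {z, c}} :=
    fun P hP => mem_of_transversal_triangle hdist (card_eq_two_of_mem_memberSubfamily hsize hP)
      (inter_nonempty_of_mem_memberSubfamily hinter hP hA (by simp; tauto))
      (inter_nonempty_of_mem_memberSubfamily hinter hP hB (by simp; tauto))
      (inter_nonempty_of_mem_memberSubfamily hinter hP hC (by simp; tauto))
  have hcard : 4 ≤ #(F.memberSubfamily y) := by rw [card_memberSubfamily_eq_degree]; omega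
  simp only [List.nodup_cons, List.mem_cons, List.not_mem_nil, List.nodup_nil, not_or] at hdist
  rcases subset_or_subset_or_subset_of_subset_union hsix card_le_two card_le_two card_le_two
    hcard with h | h | h <;> rw [insert_subset_iff, singleton_subset_iff] at h
  · exact exists_degree_le_three_of_disjoint_mem_memberSubfamily hsize hinter hn h.1 h.2
      (by simp; tauto) hA (by simp; tauto) (by simp)
  · exact exists_degree_le_three_of_disjoint_mem_memberSubfamily hsize hinter hn h.1 h.2
      (by simp; tauto) hB (by simp; tauto) (by simp)
  · exact exists_degree_le_three_of_disjoint_mem_memberSubfamily hsize hinter hn h.1 h.2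
      (by simp; tauto) hC (by simp; tauto) (by simp)

lemma exists_degree_le_three_of_subset_union [Fintype α] (hsize : ∀ A ∈ F, #A = 3)
    (hinter : ∀ A ∈ F, ∀ B ∈ F, (A ∩ B).Nonempty) (hn : 7 ≤ Fintype.card α) {A B C : Finset α}
    (hA : A ∈ F) (hB : B ∈ F) (hC : C ∈ F) {z : α} (hAB : A ∩ B = {z}) (hzC : z ∉ C)
    (hCAB : C ⊆ A ∪ B) : ∃ x, degree F x ≤ 3 := by
  refine exists_degree_le_three_of_forall_subset (𝒯 := {A, B, C}) (U := A ∪ B) hsize hinter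
    (by simp [insert_subset_iff, hA, hB, hC]) (fun v => ?_) (by simp [hCAB]) ?_
  · by_cases hvA : v ∈ A
    · by_cases hvB : v ∈ B
      · refine ⟨C, by simp, ?_⟩
        rwa [mem_singleton.1 (hAB ▸ mem_inter.2 ⟨hvA, hvB⟩ : v ∈ ({z} : Finset α))]
      · exact ⟨B, by simp, hvB⟩
    · exact ⟨A, by simp, hvA⟩
  · have := card_union_add_card_inter A B
    rw [hAB, hsize A hA, hsize B hB, card_singleton] at this
    omega

lemma exists_degree_le_three_of_inter_eq_singleton [Fintype α] (hsize : ∀ A ∈ F, #A = 3)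
    (hinter : ∀ A ∈ F, ∀ B ∈ F, (A ∩ B).Nonempty) (hn : 7 ≤ Fintype.card α) {A B C : Finset α}
    (hA : A ∈ F) (hB : B ∈ F) (hC : C ∈ F) {z : α} (hAB : A ∩ B = {z}) (hzC : z ∉ C) :
    ∃ x, degree F x ≤ 3 := by
  by_cases hCAB : C ⊆ A ∪ B
  · exact exists_degree_le_three_of_subset_union hsize hinter hn hA hB hC hAB hzC hCAB
  have hABz : ∀ v ∈ A, v ∈ B → v = z := fun v hvA hvB =>
    mem_singleton.1 (hAB ▸ mem_inter.2 ⟨hvA, hvB⟩)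
  have hzAB : z ∈ A ∩ B := hAB ▸ mem_singleton_self z
  obtain ⟨a, ha⟩ := hinter C hC A hA
  obtain ⟨b, hb⟩ := hinter C hC B hB
  obtain ⟨⟨haC, haA⟩, ⟨hbC, hbB⟩⟩ := And.intro (mem_inter.1 ha) (mem_inter.1 hb)
  have haB : a ∉ B := fun h => hzC (hABz a haA h ▸ haC)
  have hbA : b ∉ A := fun h => hzC (hABz b h hbB ▸ hbC)
  obtain ⟨c, hcC, hcAB⟩ := not_subset.1 hCAB
  rw [mem_union, not_or] at hcAB
  obtain ⟨p, hpz, hpa, rfl⟩ := exists_eq_triple_of_mem (hsize A hA) (mem_inter.1 hzAB).1 haA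
    (fun h => hzC (h ▸ haC))
  obtain ⟨q, hqz, hqb, rfl⟩ := exists_eq_triple_of_mem (hsize B hB) (mem_inter.1 hzAB).2 hbB
    (fun h => hzC (h ▸ hbC))
  have hpq : p ≠ q := fun h => hpz (hABz p (by simp) (by simp [h]))
  simp only [mem_insert, mem_singleton, not_or] at hcAB haB hbA
  have hdist : [z, a, p, b, q, c].Nodup := by simp; grind
  obtain rfl : C = {a, b, c} := (eq_of_subset_of_card_le
    (by simp [insert_subset_iff, haC, hbC, hcC])
    (by rw [hsize C hC, card_eq_three.2 ⟨a, b, c, by grind, by grind, by grind, rfl⟩])).symm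
  exact exists_degree_le_three_of_triangle hsize hinter hn hdist hA hB hC

lemma exists_degree_le_one_of_forall_card_inter_ne_one [Fintype α] (hsize : ∀ A ∈ F, #A = 3)
    (hinter : ∀ A ∈ F, ∀ B ∈ F, (A ∩ B).Nonempty) (hone : ∀ A ∈ F, ∀ B ∈ F, #(A ∩ B) ≠ 1)
    (hn : 7 ≤ Fintype.card α) : ∃ x, degree F x ≤ 1 := by
  have htwo : ∀ A ∈ F, ∀ B ∈ F, A ≠ B → #(A ∩ B) = 2 := fun A hA B hB hAB =>
    card_inter_eq_two (hsize A hA) (hsize B hB) hAB (hinter A hA B hB) (hone A hA B hB)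
  by_cases h₀ : ∃ x, degree F x = 0
  · obtain ⟨x, hx⟩ := h₀
    exact ⟨x, hx ▸ zero_le_one⟩
  have hcover : ∀ x, ∃ A ∈ F, x ∈ A := fun x => by
    obtain ⟨A, hA⟩ := card_pos.1 (Nat.pos_of_ne_zero fun h => h₀ ⟨x, h⟩)
    exact ⟨A, (mem_filter.1 hA).1, (mem_filter.1 hA).2⟩
  obtain ⟨x₀⟩ : Nonempty α := Fintype.card_pos_iff.1 (by omega)
  obtain ⟨A, hA, -⟩ := hcover x₀
  obtain ⟨u, huA⟩ := exists_notMem_of_card_lt (s := A) (by rw [hsize A hA]; omega)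
  obtain ⟨B, hB, huB⟩ := hcover u
  obtain ⟨w, hw⟩ := exists_notMem_of_card_lt (s := A ∪ B)
    ((card_union_le A B).trans_lt (by rw [hsize A hA, hsize B hB]; omega))
  rw [mem_union, not_or] at hw
  have hlink : ∀ E ∈ F, w ∈ E → E.erase w = A ∩ B := fun E hE hwE =>
    erase_eq_inter_of_card_inter_eq_two (hsize E hE) hwE hw.1 hw.2
      (htwo E hE A hA fun h => hw.1 (h ▸ hwE)) (htwo E hE B hB fun h => hw.2 (h ▸ hwE))
      (htwo A hA B hB fun h => huA (h ▸ huB))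
  refine ⟨w, card_le_one.2 fun E hE E' hE' => ?_⟩
  rw [mem_filter] at hE hE'
  rw [← insert_erase hE.2, ← insert_erase hE'.2, hlink E hE.1 hE.2, hlink E' hE'.1 hE'.2]

end Degree

/-- Proposition 1.2: if `n ≥ 7` and `F` is a non-trivial intersecting family of
`3`-subsets of `[n]`, then `δ(F) ≤ 3`. -/
theorem degree_hilton_milner_k3 (n : ℕ) (hn : 7 ≤ n)
    (F : Finset (Finset (Fin n)))
    (huniform : ∀ A ∈ F, A.card = 3)
    (hintersecting : ∀ A ∈ F, ∀ B ∈ F, (A ∩ B).Nonempty)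
    (hnontrivial : ¬ ∃ x : Fin n, ∀ A ∈ F, x ∈ A) :
    ∃ x : Fin n, (F.filter (fun A => x ∈ A)).card ≤ 3 := by
  have hn' : 7 ≤ Fintype.card (Fin n) := by rwa [Fintype.card_fin]
  by_cases hone : ∃ A ∈ F, ∃ B ∈ F, #(A ∩ B) = 1
  · obtain ⟨A, hA, B, hB, hAB⟩ := hone
    obtain ⟨z, hz⟩ := card_eq_one.1 hAB
    obtain ⟨C, hC, hzC⟩ : ∃ C ∈ F, z ∉ C := by
      push Not at hnontrivial
      exact hnontrivial z
    exact exists_degree_le_three_of_inter_eq_singleton huniform hintersecting hn' hA hB hC hz hzC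
  · push Not at hone
    obtain ⟨x, hx⟩ :=
      exists_degree_le_one_of_forall_card_inter_ne_one huniform hintersecting hone hn'
    exact ⟨x, hx.trans (by norm_num)⟩
end

section
/- Let F be an intersecting family of k-element subsets of [n] with kernel K, and for i ∈ [k] let K_i be the family of i-element members of K. Then for every i with 3 ≤ i ≤ k, |K_i| ≤ k^i. -/
/-!
Every minimal cover `S` of `F` with `|S| = i + 1` meets a fixed member `A₀ ∈ F` in some point `a`,
and `S \ {a}` is then a minimal cover of size `i` of the sets of `F` avoiding `a`. Branching over
the at most `k` choices of `a` and inducting on `i` gives at most `k ^ i` minimal covers of size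
`i`, for any family of sets of size at most `k`.
-/

open Finset

variable {α : Type*} [DecidableEq α]

def IsCover (F : Set (Finset α)) (S : Finset α) : Prop :=
  ∀ A ∈ F, (S ∩ A).Nonempty

def minimalCovers (F : Set (Finset α)) (i : ℕ) : Set (Finset α) :=
  {S | #S = i ∧ Minimal (IsCover F) S}

lemma isCover_insert_iff {F : Set (Finset α)} {a : α} {T : Finset α} :
    IsCover F (insert a T) ↔ IsCover {A ∈ F | a ∉ A} T := by
  refine ⟨fun h A ⟨hA, haA⟩ => ?_, fun h A hA => ?_⟩
  · obtain ⟨x, hx⟩ := h A hA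
    obtain ⟨hxT, hxA⟩ := mem_inter.mp hx
    exact ⟨x, mem_inter.mpr ⟨(mem_insert.mp hxT).resolve_left (by rintro rfl; exact haA hxA), hxA⟩⟩
  · by_cases haA : a ∈ A
    · exact ⟨a, mem_inter.mpr ⟨mem_insert_self a T, haA⟩⟩
    · exact (h A ⟨hA, haA⟩).mono (inter_subset_inter_right (subset_insert a T))

lemma insert_ssubset_of_ssubset_erase {S T : Finset α} {a : α} (ha : a ∈ S) (hT : T ⊂ S.erase a) :
    insert a T ⊂ S := by
  obtain ⟨y, hy, hyT⟩ := exists_of_ssubset hT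
  refine (ssubset_iff_of_subset (insert_subset ha (hT.subset.trans (erase_subset a S)))).mpr
    ⟨y, mem_of_mem_erase hy, ?_⟩
  rw [mem_insert, not_or]
  exact ⟨ne_of_mem_erase hy, hyT⟩

lemma Minimal.isCover_erase {F : Set (Finset α)} {S : Finset α} {a : α}
    (hS : Minimal (IsCover F) S) (ha : a ∈ S) :
    Minimal (IsCover {A ∈ F | a ∉ A}) (S.erase a) := by
  rw [minimal_iff_forall_lt] at hS ⊢
  refine ⟨isCover_insert_iff.mp (by rw [insert_erase ha]; exact hS.1), fun T hT hTcov => ?_⟩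
  exact hS.2 (insert_ssubset_of_ssubset_erase ha hT) (isCover_insert_iff.mpr hTcov)

lemma minimalCovers_empty_succ (i : ℕ) : minimalCovers (∅ : Set (Finset α)) (i + 1) = ∅ := by
  refine Set.eq_empty_of_forall_notMem fun S ⟨hcard, hmin⟩ => ?_
  have hS : (∅ : Finset α) < S := empty_ssubset.mpr (card_pos.mp (by omega))
  exact (minimal_iff_forall_lt.mp hmin).2 hS fun _ h => h.elim

lemma minimalCovers_succ_subset {F : Set (Finset α)} {A₀ : Finset α} (hA₀ : A₀ ∈ F) (i : ℕ) :
    minimalCovers F (i + 1) ⊆ ⋃ a ∈ A₀, insert a '' minimalCovers {A ∈ F | a ∉ A} i := by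
  rintro S ⟨hcard, hmin⟩
  obtain ⟨a, ha⟩ := hmin.prop A₀ hA₀
  obtain ⟨haS, haA₀⟩ := mem_inter.mp ha
  refine Set.mem_biUnion haA₀ ⟨S.erase a, ⟨?_, hmin.isCover_erase haS⟩, insert_erase haS⟩
  rw [card_erase_of_mem haS, hcard, Nat.add_sub_cancel]

theorem encard_minimalCovers_le {F : Set (Finset α)} {k : ℕ} (hF : ∀ A ∈ F, #A ≤ k) (i : ℕ) :
    (minimalCovers F i).encard ≤ k ^ i := by
  induction i generalizing F with
  | zero =>
    have hsub : minimalCovers F 0 ⊆ {∅} := fun S hS => card_eq_zero.mp hS.1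
    simpa using Set.encard_le_encard hsub
  | succ i ih =>
    rcases F.eq_empty_or_nonempty with rfl | ⟨A₀, hA₀⟩
    · simp [minimalCovers_empty_succ]
    calc (minimalCovers F (i + 1)).encard
        ≤ ∑ a ∈ A₀, (insert a '' minimalCovers {A ∈ F | a ∉ A} i).encard :=
          (Set.encard_le_encard (minimalCovers_succ_subset hA₀ i)).trans
            (A₀.set_encard_biUnion_le _)
      _ ≤ ∑ _a ∈ A₀, (k ^ i : ℕ∞) :=
          sum_le_sum fun a _ => (Set.encard_image_le _ _).trans (ih fun A hA => hF A hA.1)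
      _ = #A₀ * k ^ i := by rw [sum_const, nsmul_eq_mul]
      _ ≤ k * k ^ i := by gcongr; exact_mod_cast hF A₀ hA₀
      _ = k ^ (i + 1) := by ring

theorem kernel_size_bound_general (n k i : ℕ)
    (F : Finset (Finset (Fin n)))
    (huniform : ∀ A ∈ F, A.card = k) :
    {S : Finset (Fin n) | S.card = i ∧ (∀ A ∈ F, (S ∩ A).Nonempty) ∧
      ∀ S' ⊂ S, ¬ (∀ A ∈ F, (S' ∩ A).Nonempty)}.ncard ≤ k ^ i := by
  have hcovers : {S : Finset (Fin n) | S.card = i ∧ (∀ A ∈ F, (S ∩ A).Nonempty) ∧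
      ∀ S' ⊂ S, ¬ (∀ A ∈ F, (S' ∩ A).Nonempty)} = minimalCovers (F : Set (Finset (Fin n))) i := by
    ext S
    simp only [minimalCovers, minimal_iff_forall_lt, IsCover, Set.mem_ofPred_eq, mem_coe]
  rw [hcovers]
  have hbound := encard_minimalCovers_le (F := (F : Set (Finset (Fin n))))
    (fun A hA => (huniform A hA).le) i
  exact_mod_cast (Set.encard_le_coe_iff_finite_ncard_le.mp (by exact_mod_cast hbound)).2

/-- Lemma 2.6: if `F` is an intersecting family of `k`-subsets of `[n]` and `3 ≤ i ≤ k`,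
then the number of minimal covers of `F` of size `i` is at most `k^i`. -/
theorem kernel_size_bound (n k i : ℕ) (hi : 3 ≤ i) (hik : i ≤ k)
    (F : Finset (Finset (Fin n)))
    (huniform : ∀ A ∈ F, A.card = k)
    (hintersecting : ∀ A ∈ F, ∀ B ∈ F, (A ∩ B).Nonempty) :
    {S : Finset (Fin n) | S.card = i ∧ (∀ A ∈ F, (S ∩ A).Nonempty) ∧
      ∀ S' ⊂ S, ¬ (∀ A ∈ F, (S' ∩ A).Nonempty)}.ncard ≤ k ^ i :=
  kernel_size_bound_general n k i F huniform
end

section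
/- Let c ≥ 1, k ≥ 2 and n be integers with n ≥ ck², and let t be an integer with 1 ≤ t ≤ k−1. Then c · C(n−2k+t−1, k−2) ≥ (c−2) · C(n−t−1, k−2). -/
/-!
Put `b = n - t - 1 = a + d` with `a = n - 2k + t - 1`, `d = 2(k - t)` and `r = k - 2`. Walking up
Pascal's triangle from `a` to `b` adds at most `d · C(b-1, r-1) = (d r / b) · C(b, r)`, so
`C(b, r) - C(a, r) ≤ (d r / b) · C(b, r)`. The hypothesis `n ≥ c k²` makes `c d r ≤ 2 b`, and the
estimate `c · C(b, r) ≤ c · C(a, r) + 2 · C(b, r)` follows.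
-/

namespace Nat

theorem choose_add_le_choose_add_mul_choose (a d r : ℕ) :
    choose (a + d) (r + 1) ≤ choose a (r + 1) + d * choose (a + d - 1) r := by
  induction d with
  | zero => simp
  | succ d ih =>
    have hmono : choose (a + d - 1) r ≤ choose (a + d) r := choose_le_choose r (by omega)
    calc choose (a + (d + 1)) (r + 1) = choose (a + d) r + choose (a + d) (r + 1) :=
          choose_succ_succ' (a + d) r
      _ ≤ choose (a + d) r + (choose a (r + 1) + d * choose (a + d) r) := by
          gcongr; exact ih.trans (by gcongr)
      _ = choose a (r + 1) + (d + 1) * choose (a + (d + 1) - 1) r := by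
          rw [show a + (d + 1) - 1 = a + d by omega]; ring

theorem add_mul_choose_add_le (a d r : ℕ) :
    (a + d) * choose (a + d) r ≤ (a + d) * choose a r + d * r * choose (a + d) r := by
  rcases r with _ | s
  · simp
  obtain h | ⟨m, hm⟩ : a + d = 0 ∨ ∃ m, a + d = m + 1 := by
    rcases a + d with _ | m <;> simp
  · simp [h]
  have hpascal : (m + 1) * choose m s = choose (m + 1) (s + 1) * (s + 1) :=
    add_one_mul_choose_eq m s
  calc (a + d) * choose (a + d) (s + 1)
      ≤ (a + d) * (choose a (s + 1) + d * choose (a + d - 1) s) := by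
        gcongr; exact choose_add_le_choose_add_mul_choose a d s
    _ = (a + d) * choose a (s + 1) + d * ((m + 1) * choose m s) := by
        rw [hm, Nat.add_sub_cancel]; ring
    _ = (a + d) * choose a (s + 1) + d * (s + 1) * choose (a + d) (s + 1) := by
        rw [hpascal, hm]; ring

theorem mul_choose_add_le_of_mul_le (a d r c : ℕ) (h : c * d * r ≤ 2 * (a + d)) :
    c * choose (a + d) r ≤ c * choose a r + 2 * choose (a + d) r := by
  rcases Nat.eq_zero_or_pos (a + d) with hb | hb
  · obtain ⟨rfl, rfl⟩ : a = 0 ∧ d = 0 := by omega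
    simp
  refine Nat.le_of_mul_le_mul_left ?_ hb
  calc (a + d) * (c * choose (a + d) r)
      = c * ((a + d) * choose (a + d) r) := by ring
    _ ≤ c * ((a + d) * choose a r + d * r * choose (a + d) r) :=
        Nat.mul_le_mul_left c (add_mul_choose_add_le a d r)
    _ = (a + d) * (c * choose a r) + (c * d * r) * choose (a + d) r := by ring
    _ ≤ (a + d) * (c * choose a r) + 2 * (a + d) * choose (a + d) r := by gcongr
    _ = (a + d) * (c * choose a r + 2 * choose (a + d) r) := by ring

end Nat

theorem mul_two_sub_mul_sub_two_le (c k n t : ℕ) (hc : 1 ≤ c) (hn : c * k ^ 2 ≤ n)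
    (ht1 : 1 ≤ t) (ht2 : t ≤ k - 1) :
    c * (2 * (k - t)) * (k - 2) ≤ 2 * (n - t - 1) := by
  obtain ⟨s, rfl⟩ : ∃ s, t = s + 1 := ⟨t - 1, by omega⟩
  obtain ⟨u, rfl⟩ : ∃ u, k = s + u + 2 := ⟨k - s - 2, by omega⟩
  have hsq : c * (s + u + 2) ^ 2 =
      c * (u + 1) * (s + u) + c * (s * (s + u) + 3 * (s + u) + 4) := by ring
  have hrest : s + 2 ≤ c * (s * (s + u) + 3 * (s + u) + 4) :=
    le_trans (by nlinarith) (Nat.le_mul_of_pos_left _ hc)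
  rw [show s + u + 2 - (s + 1) = u + 1 by omega, Nat.add_sub_cancel,
    show c * (2 * (u + 1)) * (s + u) = 2 * (c * (u + 1) * (s + u)) by ring]
  omega

theorem binom_ratio_estimate_one_general (c k n t : ℕ) (hc : 1 ≤ c)
    (hn : c * k ^ 2 ≤ n) (ht1 : 1 ≤ t) (ht2 : t ≤ k - 1) :
    ((c : ℤ) - 2) * Nat.choose (n - t - 1) (k - 2) ≤
      (c : ℤ) * Nat.choose (n - 2 * k + t - 1) (k - 2) := by
  have hk : 2 ≤ k := by omega
  have h2k : 2 * k ≤ n := by nlinarith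
  have hb : n - 2 * k + t - 1 + 2 * (k - t) = n - t - 1 := by omega
  have key := Nat.mul_choose_add_le_of_mul_le (n - 2 * k + t - 1) (2 * (k - t)) (k - 2) c
    (hb ▸ mul_two_sub_mul_sub_two_le c k n t hc hn ht1 ht2)
  rw [hb] at key
  zify at key
  linarith

/-- Estimate (1): for `c ≥ 1`, `k ≥ 2`, `n ≥ ck²` and `1 ≤ t ≤ k-1`,
`c · C(n-2k+t-1, k-2) ≥ (c-2) · C(n-t-1, k-2)`. -/
theorem binom_ratio_estimate_one (c k n t : ℕ) (hc : 1 ≤ c) (hk : 2 ≤ k)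
    (hn : c * k ^ 2 ≤ n) (ht1 : 1 ≤ t) (ht2 : t ≤ k - 1) :
    ((c : ℤ) - 2) * Nat.choose (n - t - 1) (k - 2) ≤
      (c : ℤ) * Nat.choose (n - 2 * k + t - 1) (k - 2) :=
  binom_ratio_estimate_one_general c k n t hc hn ht1 ht2
end

section
/- Let c ≥ 1, k ≥ 4 and n be integers with n ≥ ck². Then c · C(n−k−2, k−3) ≥ (c−1) · C(n−3, k−3). -/
/-!
Put `A = C(n-3, k-3)`, `B = C(n-k-2, k-3)` and `D = C(n-4, k-4)`. Lowering the top index of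
`A` one step at a time, `k - 1` times, Pascal's rule loses at most `D` per step, so
`A ≤ B + (k-1) D`. The absorption identity `(k-3) A = (n-3) D` turns this into
`A - B ≤ (k-1)(k-3) A / (n-3) ≤ A / c`, because `c (k-1)(k-3) ≤ c k² - 3 ≤ n - 3`.
-/

namespace Nat

theorem choose_succ_le_choose_pred_add (b m : ℕ) :
    choose b (m + 1) ≤ choose (b - 1) (m + 1) + choose (b - 1) m := by
  cases b with
  | zero => simp
  | succ b => simp [choose_succ_succ, add_comm]

theorem choose_le_choose_sub_add_mul (a m : ℕ) :
    ∀ t, choose a (m + 1) ≤ choose (a - t) (m + 1) + t * choose (a - 1) m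
  | 0 => by simp
  | t + 1 => by
    have pascal := choose_succ_le_choose_pred_add (a - t) m
    have mono := choose_le_choose m (show a - t - 1 ≤ a - 1 by omega)
    have ih := choose_le_choose_sub_add_mul a m t
    rw [show a - (t + 1) = a - t - 1 by omega, add_one_mul]
    omega

theorem mul_choose_le_mul_choose_sub_add {c t m N : ℕ} (h : c * t * m ≤ N) :
    c * choose N m ≤ c * choose (N - t) m + choose N m := by
  rcases m with _ | m
  · simp
  rcases N with _ | N
  · simp
  have telescope := choose_le_choose_sub_add_mul (N + 1) m t
  rw [add_tsub_cancel_right] at telescope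
  have loss : c * (t * choose N m) ≤ choose (N + 1) (m + 1) := by
    refine le_of_mul_le_mul_right ?_ m.succ_pos
    calc c * (t * choose N m) * (m + 1) = c * t * (m + 1) * choose N m := by ring
      _ ≤ (N + 1) * choose N m := mul_le_mul_right _ h
      _ = choose (N + 1) (m + 1) * (m + 1) := add_one_mul_choose_eq N m
  calc c * choose (N + 1) (m + 1)
      ≤ c * (choose (N + 1 - t) (m + 1) + t * choose N m) := mul_le_mul_left c telescope
    _ ≤ c * choose (N + 1 - t) (m + 1) + choose (N + 1) (m + 1) := by rw [mul_add]; omega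

end Nat

theorem mul_sub_one_mul_sub_three_le (c k : ℕ) : c * ((k - 1) * (k - 3)) ≤ c * k ^ 2 - 3 := by
  rcases Nat.eq_zero_or_pos c with rfl | hc
  · simp
  rcases le_or_gt k 3 with hk | hk
  · simp [Nat.sub_eq_zero_of_le hk]
  obtain ⟨j, rfl⟩ : ∃ j, k = j + 4 := ⟨k - 4, by omega⟩
  have expand : (j + 4 - 1) * (j + 4 - 3) + (4 * j + 13) = (j + 4) ^ 2 := by
    rw [show j + 4 - 1 = j + 3 by omega, show j + 4 - 3 = j + 1 by omega]; ring
  have : c * ((j + 4 - 1) * (j + 4 - 3)) + 3 ≤ c * (j + 4) ^ 2 := by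
    rw [← expand, mul_add]; nlinarith
  omega

theorem binom_ratio_estimate_two_general (c k n : ℕ)
    (hn : c * k ^ 2 ≤ n) :
    ((c : ℤ) - 1) * Nat.choose (n - 3) (k - 3) ≤
      (c : ℤ) * Nat.choose (n - k - 2) (k - 3) := by
  have h : c * (k - 1) * (k - 3) ≤ n - 3 :=
    calc c * (k - 1) * (k - 3) = c * ((k - 1) * (k - 3)) := Nat.mul_assoc ..
      _ ≤ c * k ^ 2 - 3 := mul_sub_one_mul_sub_three_le c k
      _ ≤ n - 3 := Nat.sub_le_sub_right hn 3
  have mono := Nat.choose_le_choose (k - 3) (show n - 3 - (k - 1) ≤ n - k - 2 by omega)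
  have key :
      c * (n - 3).choose (k - 3) ≤ c * (n - k - 2).choose (k - 3) + (n - 3).choose (k - 3) :=
    (Nat.mul_choose_le_mul_choose_sub_add h).trans (by gcongr)
  zify at key
  linarith

/-- Estimate: for `c ≥ 1`, `k ≥ 4`, `n ≥ ck²`,
`c · C(n-k-2, k-3) ≥ (c-1) · C(n-3, k-3)`. -/
theorem binom_ratio_estimate_two (c k n : ℕ) (hc : 1 ≤ c) (hk : 4 ≤ k)
    (hn : c * k ^ 2 ≤ n) :
    ((c : ℤ) - 1) * Nat.choose (n - 3) (k - 3) ≤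
      (c : ℤ) * Nat.choose (n - k - 2) (k - 3) :=
  binom_ratio_estimate_two_general c k n hn
end

section
/- Let k ≥ 4, ℓ ≥ 4, and m ≥ kℓ be integers, let T₁, T₂, T₃ be three pairwise disjoint ℓ-element subsets of [m], and let F be an intersecting family of k-element subsets of [m] such that every member of F intersects each of T₁, T₂, T₃. Let F₄ = {F ∈ F : |F ∩ (T₁ ∪ T₂ ∪ T₃)| = 4}. Then |F₄| ≤ 3(ℓ−1)ℓ² · C(m−3ℓ, k−4). -/
/-!
Katona-type averaging. Let `G` be the group of permutations of `[m]` fixing each of `T₁`, `T₂`,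
`T₃` (hence also the outside `O`) setwise. A member of `F₄` meets one `Tᵢ` in two points, the
other two in one point each and `O` in `k - 4` points; this gives three types, each a single
`G`-orbit of size `N = C(ℓ,2) ℓ² C(m-3ℓ,k-4)`. Fix pairwise disjoint sets `X₁, …, Xₙ`,
`n = ⌈ℓ/2⌉`, of prescribed types (there is room since `m ≥ kℓ`). Every image of this
configuration under `G` contains at most one member of the intersecting family `F`, so averaging
over `G` gives `∑ᵢ |F ∩ G·Xᵢ| / |G·Xᵢ| ≤ 1`, i.e. `∑ᵢ |F ∩ G·Xᵢ| ≤ N`. Letting the types cycle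
along the configuration and summing over the three rotations yields `n |F₄| ≤ 3N`, i.e.
`|F₄| ≤ 3(ℓ-1)ℓ² C(m-3ℓ,k-4)`.
-/

open Finset Function Pointwise

section Katona

variable {G α : Type*} [Group G] [Fintype G] [MulAction G α] [DecidableEq α]

theorem card_filter_smul_mem_mul_card_orbit (F : Finset (Finset α)) (X : Finset α) :
    #{g : G | g • X ∈ F} * #(univ.image (· • X : G → Finset α)) =
      #(F ∩ univ.image (· • X : G → Finset α)) * Fintype.card G := by
  set O := univ.image (· • X : G → Finset α)
  have hfiber : ∀ Y ∈ O, #{g : G | g • X = Y} = #{g : G | g • X = X} := by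
    intro Y hY
    obtain ⟨h, -, rfl⟩ := mem_image.1 hY
    refine card_equiv (Equiv.mulLeft h⁻¹) fun g => ?_
    simp [mul_smul, inv_smul_eq_iff]
  have hF : #{g : G | g • X ∈ F} = #(F ∩ O) * #{g : G | g • X = X} := by
    rw [card_eq_sum_card_fiberwise (f := (· • X)) (t := F ∩ O)
      fun g hg => mem_inter.2 ⟨(mem_filter.1 hg).2, mem_image_of_mem _ (mem_univ g)⟩,
      ← smul_eq_mul, ← sum_const]
    refine sum_congr rfl fun Y hY => ?_
    rw [filter_filter, ← hfiber Y (mem_inter.1 hY).2]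
    congr 1; ext g; simp +contextual [(mem_inter.1 hY).1]
  have hG : Fintype.card G = #O * #{g : G | g • X = X} := by
    rw [← card_univ, card_eq_sum_card_image (· • X), ← smul_eq_mul, ← sum_const]
    exact sum_congr rfl fun Y hY => by rw [← hfiber Y hY]
  rw [hF, hG]; ring

theorem sum_card_inter_orbit_div_le_one {F : Finset (Finset α)}
    (hF : (F : Set (Finset α)).Intersecting) {ι : Type*} [Fintype ι] {X : ι → Finset α}
    (hX : Pairwise (Disjoint on X)) :
    ∑ i, (#(F ∩ univ.image (· • X i : G → Finset α)) : ℚ) /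
        #(univ.image (· • X i : G → Finset α)) ≤ 1 := by
  have hcount : ∑ i, #{g : G | g • X i ∈ F} ≤ Fintype.card G :=
    calc ∑ i, #{g : G | g • X i ∈ F} = ∑ g : G, #{i | g • X i ∈ F} := by
          simp only [card_filter]; exact sum_comm
      _ ≤ ∑ _g : G, 1 := by
          refine sum_le_sum fun g _ => card_le_one.2 fun i hi j hj => ?_
          by_contra hij
          refine hF (mem_filter.1 hi).2 (mem_filter.1 hj).2 ?_
          simpa only [smul_finset_def, disjoint_image (MulAction.injective g)] using hX hij
      _ = Fintype.card G := by simp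
  have hG : (0 : ℚ) < Fintype.card G := by exact_mod_cast Fintype.card_pos
  have hterm (i : ι) : (#(F ∩ univ.image (· • X i : G → Finset α)) : ℚ) /
      #(univ.image (· • X i : G → Finset α)) = #{g : G | g • X i ∈ F} / Fintype.card G := by
    have hO : (0 : ℚ) < #(univ.image (· • X i : G → Finset α)) := by
      exact_mod_cast (univ_nonempty.image _).card_pos
    rw [div_eq_div_iff hO.ne' hG.ne']
    exact_mod_cast (card_filter_smul_mem_mul_card_orbit (G := G) F (X i)).symm
  rw [sum_congr rfl fun i _ => hterm i, ← sum_div, div_le_one hG]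
  exact_mod_cast hcount

theorem sum_card_inter_orbit_le {F : Finset (Finset α)}
    (hF : (F : Set (Finset α)).Intersecting) {ι : Type*} [Fintype ι] {X : ι → Finset α}
    (hX : Pairwise (Disjoint on X)) {N : ℕ}
    (hN : ∀ i, #(univ.image (· • X i : G → Finset α)) ≤ N) :
    ∑ i, #(F ∩ univ.image (· • X i : G → Finset α)) ≤ N := by
  have hterm (i : ι) : (#(F ∩ univ.image (· • X i : G → Finset α)) : ℚ) ≤
      #(F ∩ univ.image (· • X i : G → Finset α)) /
        #(univ.image (· • X i : G → Finset α)) * N := by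
    have hO : (0 : ℚ) < #(univ.image (· • X i : G → Finset α)) := by
      exact_mod_cast (univ_nonempty.image _).card_pos
    rw [div_mul_eq_mul_div, le_div_iff₀ hO]
    gcongr
    exact_mod_cast hN i
  have hsum : (∑ i, #(F ∩ univ.image (· • X i : G → Finset α)) : ℚ) ≤ N :=
    calc _ ≤ _ := sum_le_sum fun i _ => hterm i
      _ = (∑ i, (#(F ∩ univ.image (· • X i : G → Finset α)) : ℚ) /
            #(univ.image (· • X i : G → Finset α))) * N := by rw [sum_mul]
      _ ≤ N := mul_le_of_le_one_left (Nat.cast_nonneg N)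
            (sum_card_inter_orbit_div_le_one hF hX)
  exact_mod_cast hsum

end Katona

section Blocks

variable {α β : Type*} [DecidableEq β] (blk : α → β)

def blockProfile (X : Finset α) (b : β) : ℕ := #{x ∈ X | blk x = b}

def blockStabilizer : Subgroup (Equiv.Perm α) where
  carrier := {σ | ∀ x, blk (σ x) = blk x}
  mul_mem' hσ hτ x := (hσ _).trans (hτ x)
  one_mem' _ := rfl
  inv_mem' {σ} hσ x := by simpa using (hσ (σ⁻¹ x)).symm

instance [Fintype α] : DecidablePred (· ∈ blockStabilizer blk) := fun σ =>
  inferInstanceAs (Decidable (∀ x, blk (σ x) = blk x))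

variable {blk}

theorem blockProfile_smul [DecidableEq α] (σ : blockStabilizer blk) (X : Finset α) :
    blockProfile blk (σ • X) = blockProfile blk X := by
  ext b
  rw [blockProfile, blockProfile, smul_finset_def, filter_image,
    card_image_of_injective _ (MulAction.injective σ)]
  congr 2; ext x
  exact σ.2 x ▸ Iff.rfl

theorem card_fiber_blockLabel [Fintype α] [DecidableEq α] (X : Finset α) (b : β) (t : Bool) :
    Fintype.card {x // (blk x, decide (x ∈ X)) = (b, t)} =
      if t then blockProfile blk X b else blockProfile blk univ b - blockProfile blk X b := by
  have hsplit := card_filter_add_card_filter_not (s := {x | blk x = b}) (· ∈ X)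
  have hX : #{x ∈ {x | blk x = b} | x ∈ X} = blockProfile blk X b := by
    rw [blockProfile, filter_filter]; congr 1; ext x; simp [and_comm]
  rw [Fintype.card_subtype]
  cases t
  · rw [hX, filter_filter] at hsplit
    simp only [Prod.mk.injEq, decide_eq_false_iff_not, Bool.false_eq_true, if_false]
    unfold blockProfile at hsplit ⊢
    omega
  · rw [← hX, filter_filter]
    simp

theorem exists_smul_eq_of_blockProfile_eq [Fintype α] [DecidableEq α] {X Y : Finset α}
    (h : blockProfile blk Y = blockProfile blk X) : ∃ σ : blockStabilizer blk, σ • X = Y := by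
  have hcard (c : β × Bool) : Fintype.card {x // (blk x, decide (x ∈ X)) = c} =
      Fintype.card {x // (blk x, decide (x ∈ Y)) = c} := by
    rw [card_fiber_blockLabel, card_fiber_blockLabel, h]
  -- match the fibres of `x ↦ (blk x, x ∈ X)` bijectively with those of `x ↦ (blk x, x ∈ Y)`
  obtain ⟨σ, hσ⟩ : ∃ σ : Equiv.Perm α, ∀ x, blk (σ x) = blk x ∧ (σ x ∈ Y ↔ x ∈ X) :=
    ⟨Equiv.ofFiberEquiv fun c => Fintype.equivOfCardEq (hcard c), fun x => by
      simpa only [Prod.mk.injEq, decide_eq_decide] using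
        Equiv.ofFiberEquiv_map (fun c => Fintype.equivOfCardEq (hcard c)) x⟩
  let σ' : blockStabilizer blk := ⟨σ, fun x => (hσ x).1⟩
  refine ⟨σ', ?_⟩
  ext y
  obtain ⟨x, rfl⟩ := σ.surjective y
  exact (smul_mem_smul_finset_iff σ').trans (hσ x).2.symm

theorem image_smul_eq_filter_blockProfile [Fintype α] [DecidableEq α] [Fintype β]
    (X : Finset α) :
    univ.image (· • X : blockStabilizer blk → Finset α) =
      ({Y | blockProfile blk Y = blockProfile blk X} : Finset (Finset α)) := by
  ext Y
  rw [mem_image, mem_filter]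
  simp only [mem_univ, true_and]
  constructor
  · rintro ⟨σ, rfl⟩
    exact blockProfile_smul σ X
  · exact exists_smul_eq_of_blockProfile_eq

theorem card_filter_blockProfile_eq_le [Fintype α] [Fintype β] (p : β → ℕ) :
    #{Y : Finset α | blockProfile blk Y = p} ≤
      ∏ b, (blockProfile blk univ b).choose (p b) := by
  calc #{Y : Finset α | blockProfile blk Y = p}
      ≤ #(Fintype.piFinset fun b => powersetCard (p b) {x | blk x = b}) := by
        refine card_le_card_of_injOn (fun Y b => {x ∈ Y | blk x = b}) (fun Y hY => ?_) ?_
        · simp only [mem_coe, Fintype.mem_piFinset, mem_powersetCard]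
          exact fun b => ⟨filter_subset_filter _ (subset_univ Y),
            congr_fun (mem_filter.1 (mem_coe.1 hY)).2 b⟩
        · intro Y _ Z _ hYZ
          ext x
          simpa using congr_arg (x ∈ ·) (congr_fun hYZ (blk x))
    _ = ∏ b, (blockProfile blk univ b).choose (p b) := by
        rw [Fintype.card_piFinset]; simp only [card_powersetCard]; rfl

theorem exists_subset_blockProfile_eq [DecidableEq α] [Fintype β] {S : Finset α} {p : β → ℕ}
    (hp : ∀ b, p b ≤ blockProfile blk S b) : ∃ X ⊆ S, blockProfile blk X = p := by
  choose Y hYS hY using fun b => exists_subset_card_eq (hp b)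
  have hblk (a : β) : ∀ x ∈ Y a, blk x = a := fun x hx => (mem_filter.1 (hYS a hx)).2
  refine ⟨univ.biUnion Y, biUnion_subset.2 fun b _ => (hYS b).trans (filter_subset _ _), ?_⟩
  ext b
  rw [blockProfile, ← hY b]
  congr 1; ext x
  simp only [mem_filter, mem_biUnion, mem_univ, true_and]
  constructor
  · rintro ⟨⟨a, hx⟩, rfl⟩
    rwa [hblk a x hx]
  · exact fun hx => ⟨⟨b, hx⟩, hblk b x hx⟩

theorem exists_pairwise_disjoint_blockProfile_eq [DecidableEq α] [Fintype β] {n : ℕ}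
    (p : Fin n → β → ℕ) (S : Finset α) (hp : ∀ b, ∑ i, p i b ≤ blockProfile blk S b) :
    ∃ X : Fin n → Finset α, (∀ i, X i ⊆ S) ∧ Pairwise (Disjoint on X) ∧
      ∀ i, blockProfile blk (X i) = p i := by
  induction n generalizing S with
  | zero => exact ⟨finZeroElim, finZeroElim, finZeroElim, finZeroElim⟩
  | succ n ih =>
    simp only [Fin.sum_univ_succ] at hp
    obtain ⟨X₀, hX₀S, hX₀⟩ :=
      exists_subset_blockProfile_eq fun b => (Nat.le_add_right _ _).trans (hp b)
    obtain ⟨X, hXS, hX, hXp⟩ := ih (fun i => p i.succ) (S \ X₀) fun b => by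
      have hsplit : {x ∈ S \ X₀ | blk x = b} =
          {x ∈ S | blk x = b} \ {x ∈ X₀ | blk x = b} := by
        ext x; simp only [mem_filter, mem_sdiff]; tauto
      have := congrFun hX₀ b
      rw [blockProfile, hsplit, card_sdiff_of_subset (filter_subset_filter _ hX₀S)]
      unfold blockProfile at this hp
      have := hp b
      omega
    have hX₀X (i : Fin n) : Disjoint X₀ (X i) := disjoint_sdiff.mono_right (hXS i)
    refine ⟨Fin.cons X₀ X, Fin.cases hX₀S fun i => (hXS i).trans sdiff_subset, ?_,
      Fin.cases hX₀ hXp⟩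
    intro i j hij
    cases i using Fin.cases <;> cases j using Fin.cases
    · exact absurd rfl hij
    · exact hX₀X _
    · exact (hX₀X _).symm
    · exact hX fun h => hij (congrArg Fin.succ h)

theorem sum_card_filter_blockProfile_le [Fintype α] [DecidableEq α] [Fintype β]
    {F : Finset (Finset α)} (hF : (F : Set (Finset α)).Intersecting) {n : ℕ}
    (p : Fin n → β → ℕ) (hp : ∀ b, ∑ i, p i b ≤ blockProfile blk univ b) {N : ℕ}
    (hN : ∀ i, ∏ b, (blockProfile blk univ b).choose (p i b) ≤ N) :
    ∑ i, #{Y ∈ F | blockProfile blk Y = p i} ≤ N := by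
  obtain ⟨X, -, hX, hXp⟩ := exists_pairwise_disjoint_blockProfile_eq p univ hp
  have horbit (i : Fin n) : univ.image (· • X i : blockStabilizer blk → Finset α) =
      ({Y | blockProfile blk Y = p i} : Finset (Finset α)) := by
    rw [image_smul_eq_filter_blockProfile, hXp]
  have := sum_card_inter_orbit_le hF hX (N := N) fun i => by
    rw [horbit]; exact (card_filter_blockProfile_eq_le _).trans (hN i)
  simpa only [horbit, inter_filter, inter_univ] using this

end Blocks

section FourTypes

variable {α : Type*} [DecidableEq α] {T₁ T₂ T₃ : Finset α}

def blockIndex (T₁ T₂ T₃ : Finset α) (x : α) : Fin 4 :=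
  if x ∈ T₁ then 0 else if x ∈ T₂ then 1 else if x ∈ T₃ then 2 else 3

theorem blockProfile_blockIndex (h₁₂ : Disjoint T₁ T₂) (h₁₃ : Disjoint T₁ T₃)
    (h₂₃ : Disjoint T₂ T₃) (X : Finset α) :
    blockProfile (blockIndex T₁ T₂ T₃) X =
      ![#(X ∩ T₁), #(X ∩ T₂), #(X ∩ T₃), #(X \ (T₁ ∪ T₂ ∪ T₃))] := by
  funext b
  fin_cases b <;> simp only [blockProfile] <;> congr 1 <;> ext x <;> rw [mem_filter] <;>
    by_cases h₁ : x ∈ T₁ <;> by_cases h₂ : x ∈ T₂ <;> by_cases h₃ : x ∈ T₃ <;>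
    simp_all [blockIndex, disjoint_left]

def fourProfile (k' : ℕ) (τ : Fin 3) : Fin 4 → ℕ :=
  ![if τ = 0 then 2 else 1, if τ = 1 then 2 else 1, if τ = 2 then 2 else 1, k']

theorem card_filter_add_ofNat_eq_le (n : ℕ) (s j : Fin 3) :
    #{i : Fin n | s + Fin.ofNat 3 i = j} ≤ (n + 2) / 3 := by
  calc #{i : Fin n | s + Fin.ofNat 3 i = j} ≤ #(range ((n + 2) / 3)) := by
        refine card_le_card_of_injOn (fun i => (i : ℕ) / 3) (fun i _ => ?_)
          fun i hi i' hi' h => ?_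
        · simp only [coe_range, Set.mem_Iio]; omega
        · have hmod : (i : ℕ) % 3 = (i' : ℕ) % 3 := by
            have := congrArg Fin.val <| add_left_cancel <|
              (mem_filter.1 (mem_coe.1 hi)).2.trans (mem_filter.1 (mem_coe.1 hi')).2.symm
            simpa only [Fin.val_ofNat] using this
          simp only at h
          ext; omega
    _ = (n + 2) / 3 := card_range _

theorem sum_fourProfile_le {k' n l M : ℕ} (hl : n + (n + 2) / 3 ≤ l) (hM : n * k' ≤ M)
    (s : Fin 3) (b : Fin 4) :
    ∑ i : Fin n, fourProfile k' (s + Fin.ofNat 3 i) b ≤ ![l, l, l, M] b := by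
  have hblock (j : Fin 3) : ∑ i : Fin n, (if s + Fin.ofNat 3 i = j then 2 else 1) ≤ l := by
    have hsplit := card_filter_add_card_filter_not (s := (univ : Finset (Fin n)))
      (fun i => s + Fin.ofNat 3 i = j)
    rw [card_univ, Fintype.card_fin] at hsplit
    rw [sum_ite, sum_const, sum_const, smul_eq_mul, smul_eq_mul]
    have := card_filter_add_ofNat_eq_le n s j
    omega
  fin_cases b
  · exact hblock 0
  · exact hblock 1
  · exact hblock 2
  · simpa [fourProfile] using hM

theorem exists_blockProfile_eq_fourProfile (h₁₂ : Disjoint T₁ T₂) (h₁₃ : Disjoint T₁ T₃)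
    (h₂₃ : Disjoint T₂ T₃) {A : Finset α} (hA₁ : (A ∩ T₁).Nonempty)
    (hA₂ : (A ∩ T₂).Nonempty) (hA₃ : (A ∩ T₃).Nonempty) (hA : #(A ∩ (T₁ ∪ T₂ ∪ T₃)) = 4) :
    ∃ τ, blockProfile (blockIndex T₁ T₂ T₃) A = fourProfile (#A - 4) τ := by
  have hsum : #(A ∩ T₁) + #(A ∩ T₂) + #(A ∩ T₃) = 4 := by
    rw [← hA, inter_union_distrib_left, inter_union_distrib_left,
      card_union_of_disjoint, card_union_of_disjoint]
    · exact h₁₂.mono inter_subset_right inter_subset_right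
    · exact disjoint_union_left.2 ⟨h₁₃.mono inter_subset_right inter_subset_right,
        h₂₃.mono inter_subset_right inter_subset_right⟩
  have hout : #(A \ (T₁ ∪ T₂ ∪ T₃)) = #A - 4 := by
    rw [← hA, ← card_sdiff_add_card_inter A (T₁ ∪ T₂ ∪ T₃), Nat.add_sub_cancel]
  have h₁ := hA₁.card_pos
  have h₂ := hA₂.card_pos
  have h₃ := hA₃.card_pos
  rw [blockProfile_blockIndex h₁₂ h₁₃ h₂₃, hout]
  have : #(A ∩ T₁) = 2 ∨ #(A ∩ T₂) = 2 ∨ #(A ∩ T₃) = 2 := by omega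
  rcases this with h | h | h
  · exact ⟨0, funext fun b => by fin_cases b <;> simp [fourProfile] <;> omega⟩
  · exact ⟨1, funext fun b => by fin_cases b <;> simp [fourProfile] <;> omega⟩
  · exact ⟨2, funext fun b => by fin_cases b <;> simp [fourProfile] <;> omega⟩

theorem card_filter_card_inter_eq_four_le (h₁₂ : Disjoint T₁ T₂) (h₁₃ : Disjoint T₁ T₃)
    (h₂₃ : Disjoint T₂ T₃) {k : ℕ} {F : Finset (Finset α)} (hF : ∀ A ∈ F, #A = k)
    (hmeet : ∀ A ∈ F, (A ∩ T₁).Nonempty ∧ (A ∩ T₂).Nonempty ∧ (A ∩ T₃).Nonempty) :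
    #{A ∈ F | #(A ∩ (T₁ ∪ T₂ ∪ T₃)) = 4} ≤
      ∑ τ, #{A ∈ F | blockProfile (blockIndex T₁ T₂ T₃) A = fourProfile (k - 4) τ} := by
  refine (card_le_card fun A hA => ?_).trans card_biUnion_le
  obtain ⟨hAF, hA⟩ := mem_filter.1 hA
  obtain ⟨hA₁, hA₂, hA₃⟩ := hmeet A hAF
  obtain ⟨τ, hτ⟩ := exists_blockProfile_eq_fourProfile h₁₂ h₁₃ h₂₃ hA₁ hA₂ hA₃ hA
  exact mem_biUnion.2 ⟨τ, mem_univ τ, mem_filter.2 ⟨hAF, hF A hAF ▸ hτ⟩⟩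

theorem blockProfile_univ_blockIndex [Fintype α] (h₁₂ : Disjoint T₁ T₂)
    (h₁₃ : Disjoint T₁ T₃) (h₂₃ : Disjoint T₂ T₃) :
    blockProfile (blockIndex T₁ T₂ T₃) univ =
      ![#T₁, #T₂, #T₃, Fintype.card α - (#T₁ + #T₂ + #T₃)] := by
  rw [blockProfile_blockIndex h₁₂ h₁₃ h₂₃, univ_inter, univ_inter, univ_inter,
    ← compl_eq_univ_sdiff, card_compl, card_union_of_disjoint
      (disjoint_union_left.2 ⟨h₁₃, h₂₃⟩), card_union_of_disjoint h₁₂]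

theorem prod_choose_fourProfile (l M k' : ℕ) (τ : Fin 3) :
    ∏ b, (![l, l, l, M] b).choose (fourProfile k' τ b) = l.choose 2 * l * l * M.choose k' := by
  rw [Fin.prod_univ_four]
  fin_cases τ <;> simp [fourProfile, -mul_eq_mul_left_iff, -mul_eq_mul_right_iff] <;> ring

end FourTypes

theorem mul_sum_le_of_sum_add_ofNat_le {n N : ℕ} (c : Fin 3 → ℕ)
    (h : ∀ s, ∑ i : Fin n, c (s + Fin.ofNat 3 i) ≤ N) : n * ∑ τ, c τ ≤ 3 * N :=
  calc n * ∑ τ, c τ = ∑ _i : Fin n, ∑ τ, c τ := by simp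
    _ = ∑ i : Fin n, ∑ s : Fin 3, c (s + Fin.ofNat 3 i) :=
        sum_congr rfl fun i _ => (Equiv.sum_comp (Equiv.addRight (Fin.ofNat 3 i)) c).symm
    _ = ∑ s : Fin 3, ∑ i : Fin n, c (s + Fin.ofNat 3 i) := sum_comm
    _ ≤ ∑ _s : Fin 3, N := sum_le_sum fun s _ => h s
    _ = 3 * N := by simp

theorem le_of_mul_le_three_mul_choose_two {n l S C : ℕ} (hn : l ≤ 2 * n) (hl : 0 < l)
    (h : n * S ≤ 3 * (l.choose 2 * l * l * C)) : S ≤ 3 * (l - 1) * l ^ 2 * C := by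
  have hchoose : l.choose 2 * 2 = l * (l - 1) := by
    have := Nat.add_one_mul_choose_eq (l - 1) 1
    rwa [Nat.sub_add_cancel hl, Nat.choose_one_right, eq_comm] at this
  refine Nat.le_of_mul_le_mul_left (c := 2 * n) ?_ (by omega)
  calc 2 * n * S ≤ 2 * (3 * (l.choose 2 * l * l * C)) := by
        rw [mul_assoc]; exact Nat.mul_le_mul_left 2 h
    _ = l * (3 * (l - 1) * l ^ 2 * C) := by
        rw [show 2 * (3 * (l.choose 2 * l * l * C)) = 3 * (l.choose 2 * 2) * l * l * C by ring,
          hchoose]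
        ring
    _ ≤ 2 * n * (3 * (l - 1) * l ^ 2 * C) := Nat.mul_le_mul_right _ hn

/-- In the proof of Theorem 1.3: the members of `F` meeting `T₁ ∪ T₂ ∪ T₃` in exactly
`4` elements number at most `3(ℓ-1)ℓ² · C(m-3ℓ, k-4)`. -/
theorem F_four_bound (k l m : ℕ) (hk : 4 ≤ k) (hl : 4 ≤ l) (hm : k * l ≤ m)
    (T1 T2 T3 : Finset (Fin m))
    (hT1 : T1.card = l) (hT2 : T2.card = l) (hT3 : T3.card = l)
    (h12 : Disjoint T1 T2) (h13 : Disjoint T1 T3) (h23 : Disjoint T2 T3)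
    (F : Finset (Finset (Fin m)))
    (huniform : ∀ A ∈ F, A.card = k)
    (hintersecting : ∀ A ∈ F, ∀ B ∈ F, (A ∩ B).Nonempty)
    (hmeet : ∀ A ∈ F, (A ∩ T1).Nonempty ∧ (A ∩ T2).Nonempty ∧ (A ∩ T3).Nonempty) :
    (F.filter (fun A => (A ∩ (T1 ∪ T2 ∪ T3)).card = 4)).card ≤
      3 * (l - 1) * l ^ 2 * Nat.choose (m - 3 * l) (k - 4) := by
  classical
  have hF : (F : Set (Finset (Fin m))).Intersecting := fun A hA B hB =>
    not_disjoint_iff_nonempty_inter.2 (hintersecting A hA B hB)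
  have hsizes : blockProfile (blockIndex T1 T2 T3) univ = ![l, l, l, m - 3 * l] := by
    rw [blockProfile_univ_blockIndex h12 h13 h23, hT1, hT2, hT3, Fintype.card_fin,
      show l + l + l = 3 * l by ring]
  have hout : (l + 1) / 2 * (k - 4) ≤ m - 3 * l := by
    have hkl : (k - 4) * l + 4 * l = k * l := by rw [← add_mul, Nat.sub_add_cancel hk]
    have : (l + 1) / 2 * (k - 4) ≤ (k - 4) * l := by
      rw [mul_comm]; exact Nat.mul_le_mul_left _ (by omega)
    omega
  refine (card_filter_card_inter_eq_four_le h12 h13 h23 huniform hmeet).trans <|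
    le_of_mul_le_three_mul_choose_two (n := (l + 1) / 2) (by omega) (by omega) <|
      mul_sum_le_of_sum_add_ofNat_le _ fun s => ?_
  refine sum_card_filter_blockProfile_le hF _ (fun b => ?_) fun i => ?_
  · rw [hsizes]; exact sum_fourProfile_le (by omega) hout s b
  · rw [hsizes, prod_choose_fourProfile]
end

section
/- Let k ≥ 3, ℓ ≥ 4, and m ≥ kℓ be integers, let T₁, T₂, T₃ be three pairwise disjoint ℓ-element subsets of [m], and let F be an intersecting family of k-element subsets of [m] such that every member of F intersects each of T₁, T₂, T₃. Let F₃ = {F ∈ F : |F ∩ (T₁ ∪ T₂ ∪ T₃)| = 3}. Then |F₃| ≤ ℓ² · C(m−3ℓ, k−3). -/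
/-!
Every member of `F₃` meets `T = T₁ ∪ T₂ ∪ T₃` in a transversal `{x₁, x₂, x₃}`. Identifying each
`Tᵢ` with `ℤ/ℓ`, for fixed differences `(u, v)` the `ℓ` transversals `{w, w + u, w + v}` are
pairwise disjoint, so members of `F₃` with different `w` meet outside `T`. Their traces outside
`T` form `ℓ` cross-intersecting `(k-3)`-uniform families on `m - 3ℓ ≥ ℓ(k-3)` points, whose total
size is at most `C(m-3ℓ, k-3)` by Hilton's theorem; summing over the `ℓ²` pairs `(u, v)` gives
the bound. Hilton's theorem follows from Katona's circle method: on a cycle of length `n ≥ r a`,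
`r` cross-intersecting families of arcs of length `a` have at most `n` members in total.
-/

open Finset Function
open scoped Nat

lemma Finset.sum_card_filter_comm {α β : Type*} [Fintype α] [Fintype β] (R : α → β → Prop)
    [∀ a b, Decidable (R a b)] : ∑ a, #{b | R a b} = ∑ b, #{a | R a b} := by
  simp only [card_filter]
  exact sum_comm

def CrossIntersecting {α ι : Type*} (𝒜 : ι → Finset (Finset α)) : Prop :=
  Pairwise fun i j => ∀ A ∈ 𝒜 i, ∀ B ∈ 𝒜 j, ¬Disjoint A B

namespace ZMod

variable {n a : ℕ}

def arc (a : ℕ) (p : ZMod n) : Finset (ZMod n) :=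
  (range a).image fun t : ℕ => p + t

lemma mem_arc {p y : ZMod n} : y ∈ arc a p ↔ ∃ t < a, p + t = y := by
  simp [arc]

lemma natCast_injOn_range {b : ℕ} (hb : b ≤ n) :
    Set.InjOn (Nat.cast : ℕ → ZMod n) (range b) := by
  intro s hs t ht hst
  simp only [coe_range, Set.mem_Iio] at hs ht
  rwa [natCast_eq_natCast_iff', Nat.mod_eq_of_lt (hs.trans_le hb),
    Nat.mod_eq_of_lt (ht.trans_le hb)] at hst

lemma add_natCast_injOn_range {b : ℕ} (hb : b ≤ n) (p : ZMod n) :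
    Set.InjOn (fun t : ℕ => p + t) (range b) :=
  fun _ hs _ ht hst => natCast_injOn_range hb hs ht (add_left_cancel hst)

lemma card_arc (ha : a ≤ n) (p : ZMod n) : #(arc a p) = a := by
  rw [arc, card_image_of_injOn (add_natCast_injOn_range ha p), card_range]

lemma disjoint_arc_add (ha : 2 * a ≤ n) (p : ZMod n) :
    Disjoint (arc a p) (arc a (p + a)) := by
  simp only [disjoint_left, mem_arc]
  rintro _ ⟨s, hs, rfl⟩ ⟨t, ht, hst⟩
  have : ((a + t : ℕ) : ZMod n) = s := by push_cast; linear_combination hst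
  have := natCast_injOn_range (b := 2 * a) ha (by simp; omega) (by simp; omega) this
  omega

lemma mem_arc_of_not_disjoint {p q : ZMod n} (h : ¬Disjoint (arc a p) (arc a q)) :
    q ∈ arc (2 * a) (p - (a : ZMod n)) := by
  obtain ⟨_, hp, hq⟩ := not_disjoint_iff.1 h
  obtain ⟨s, hs, rfl⟩ := mem_arc.1 hp
  obtain ⟨t, ht, hst⟩ := mem_arc.1 hq
  refine mem_arc.2 ⟨a + s - t, by omega, ?_⟩
  rw [Nat.cast_sub (by omega)]
  push_cast
  linear_combination -hst

section Circle

variable {ι : Type*} [Fintype ι] {B : ι → Finset (ZMod n)}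

lemma not_disjoint_arc_of_two_le_card_filter_mem
    (hB : CrossIntersecting fun i => (B i).image (arc a))
    {p q : ZMod n} (hp : 2 ≤ #{i | p ∈ B i}) {k : ι} (hq : q ∈ B k) :
    ¬Disjoint (arc a p) (arc a q) := by
  obtain ⟨i, hi, j, hj, hij⟩ := one_lt_card.1 hp
  rw [mem_filter_univ] at hi hj
  obtain hik | rfl := ne_or_eq i k
  · exact hB hik _ (mem_image_of_mem _ hi) _ (mem_image_of_mem _ hq)
  · exact hB hij.symm _ (mem_image_of_mem _ hj) _ (mem_image_of_mem _ hq)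

lemma card_filter_mem_add_card_filter_mem_le
    (hB : CrossIntersecting fun i => (B i).image (arc a))
    (hι : 2 ≤ Fintype.card ι) {p q : ZMod n} (hpq : Disjoint (arc a p) (arc a q)) :
    #{i | p ∈ B i} + #{i | q ∈ B i} ≤ Fintype.card ι := by
  have hle : ∀ x : ZMod n, #{i | x ∈ B i} ≤ Fintype.card ι := fun x => card_le_univ _
  -- an arc lying in two of the families meets every arc in the union, so not the other one
  have hzero : ∀ x y : ZMod n, Disjoint (arc a x) (arc a y) → 2 ≤ #{i | x ∈ B i} →
      #{i | y ∈ B i} = 0 := fun x y hxy hx => by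
    refine card_eq_zero.2 (filter_eq_empty_iff.2 fun k _ hk => ?_)
    exact not_disjoint_arc_of_two_le_card_filter_mem hB hx hk hxy
  by_cases hp : 2 ≤ #{i | p ∈ B i}
  · have := hzero p q hpq hp; have := hle p; omega
  by_cases hq : 2 ≤ #{i | q ∈ B i}
  · have := hzero q p hpq.symm hq; have := hle q; omega
  omega

theorem sum_card_le_of_crossIntersecting_arc [NeZero n]
    (hB : CrossIntersecting fun i => (B i).image (arc a))
    (hn : Fintype.card ι * a ≤ n) : ∑ i, #(B i) ≤ n := by
  have hsum := sum_card_filter_comm fun i p => p ∈ B i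
  simp only [filter_univ_mem] at hsum
  rw [hsum]
  by_cases h : ∃ p₀, 2 ≤ #{i | p₀ ∈ B i}
  swap
  · push Not at h
    calc ∑ p, #{i | p ∈ B i} ≤ ∑ _p : ZMod n, 1 := sum_le_sum fun p _ => by have := h p; omega
      _ = n := by simp
  obtain ⟨p₀, hp₀⟩ := h
  have hι : 2 ≤ Fintype.card ι := hp₀.trans (card_le_univ _)
  have ha : 2 * a ≤ n := (Nat.mul_le_mul_right a hι).trans hn
  set m : ZMod n → ℕ := fun p => #{i | p ∈ B i}
  have hsupp : ∀ q ∉ arc (2 * a) (p₀ - (a : ZMod n)), m q = 0 := fun q hq => by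
    refine card_eq_zero.2 (filter_eq_empty_iff.2 fun k _ hk => hq ?_)
    exact mem_arc_of_not_disjoint (not_disjoint_arc_of_two_le_card_filter_mem hB hp₀ hk)
  -- pair the arc starting at `p₀ - a + t` with the disjoint one starting `a` steps later
  calc ∑ p, m p = ∑ p ∈ arc (2 * a) (p₀ - (a : ZMod n)), m p :=
        (sum_subset (subset_univ _) fun q _ hq => hsupp q hq).symm
    _ = ∑ t ∈ range (2 * a), m (p₀ - (a : ZMod n) + t) :=
        sum_image (add_natCast_injOn_range ha _)
    _ = ∑ t ∈ range a, (m (p₀ - (a : ZMod n) + t) + m (p₀ - (a : ZMod n) + t + a)) := by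
        rw [two_mul, sum_range_add, ← sum_add_distrib]
        push_cast
        simp only [add_comm (a : ZMod n), add_assoc]
    _ ≤ ∑ _t ∈ range a, Fintype.card ι :=
        sum_le_sum fun t _ => card_filter_mem_add_card_filter_mem_le hB hι (disjoint_arc_add ha _)
    _ = Fintype.card ι * a := by rw [sum_const, card_range, smul_eq_mul, mul_comm]
    _ ≤ n := hn

end Circle
end ZMod

lemma card_filter_equiv_map_eq_mul_choose {α β : Type*} [Fintype α] [Fintype β] [DecidableEq α]
    [DecidableEq β] (e : β ≃ α) (S : Finset β) {A : Finset α} (hA : #A = #S) :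
    #{σ : β ≃ α | S.map σ.toEmbedding = A} * (Fintype.card α).choose #S = (Fintype.card α)! := by
  -- composing with a permutation taking `A'` to `A` matches the fibres over `A'` and `A`
  have hfiber : ∀ A' ∈ powersetCard #S (univ : Finset α),
      #{σ : β ≃ α | S.map σ.toEmbedding = A'} = #{σ : β ≃ α | S.map σ.toEmbedding = A} := by
    intro A' hA'
    obtain ⟨τ, hτ⟩ :=
      Equiv.Perm.exists_map_finset_eq A' A ((mem_powersetCard.1 hA').2.trans hA.symm)
    refine card_equiv ((Equiv.refl β).equivCongr τ) fun σ => ?_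
    rw [mem_filter_univ, mem_filter_univ, ← hτ, ← map_inj (f := τ.toEmbedding), map_map]
    rfl
  calc #{σ : β ≃ α | S.map σ.toEmbedding = A} * (Fintype.card α).choose #S
      = ∑ A' ∈ powersetCard #S (univ : Finset α), #{σ : β ≃ α | S.map σ.toEmbedding = A'} := by
        rw [sum_const_nat hfiber, card_powersetCard, Finset.card_univ, mul_comm]
    _ = #(univ : Finset (β ≃ α)) :=
        (card_eq_sum_card_fiberwise fun σ _ => by simp [mem_powersetCard]).symm
    _ = (Fintype.card α)! := by rw [Finset.card_univ, Fintype.card_equiv e, Fintype.card_congr e]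

namespace CrossIntersecting

variable {α ι : Type*} [Fintype ι] {a : ℕ} {𝒜 : ι → Finset (Finset α)}

lemma sum_card_le_one_of_sized_zero (h : CrossIntersecting 𝒜)
    (h𝒜 : ∀ i, (𝒜 i : Set (Finset α)).Sized 0) : ∑ i, #(𝒜 i) ≤ 1 := by
  classical
  have hsub : ∀ i, 𝒜 i ⊆ {∅} := fun i A hA => mem_singleton.2 (card_eq_zero.1 (h𝒜 i hA))
  calc ∑ i, #(𝒜 i) ≤ ∑ i, if ∅ ∈ 𝒜 i then 1 else 0 := sum_le_sum fun i _ => by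
        rcases subset_singleton_iff.1 (hsub i) with h0 | h1 <;> simp [*]
    _ = #{i | ∅ ∈ 𝒜 i} := (card_filter _ _).symm
    _ ≤ 1 := card_le_one.2 fun i hi j hj => by_contra fun hij =>
        h hij ∅ ((mem_filter_univ i).1 hi) ∅ ((mem_filter_univ j).1 hj) (disjoint_empty_left _)

theorem sum_card_le_choose_of_nonempty [Fintype α] [DecidableEq α] [Nonempty α]
    (h : CrossIntersecting 𝒜) (h𝒜 : ∀ i, (𝒜 i : Set (Finset α)).Sized a)
    (ha : a ≤ Fintype.card α) (hn : Fintype.card ι * a ≤ Fintype.card α) :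
    ∑ i, #(𝒜 i) ≤ (Fintype.card α).choose a := by
  set n := Fintype.card α
  have : NeZero n := ⟨Fintype.card_ne_zero⟩
  have e : ZMod n ≃ α := Fintype.equivOfCardEq (by simp [n])
  have hcircle : ∀ σ : ZMod n ≃ α, ∑ i, #{p | (ZMod.arc a p).map σ.toEmbedding ∈ 𝒜 i} ≤ n :=
    fun σ => ZMod.sum_card_le_of_crossIntersecting_arc (by
      rintro i j hij _ hP _ hQ
      obtain ⟨p, hp, rfl⟩ := mem_image.1 hP
      obtain ⟨q, hq, rfl⟩ := mem_image.1 hQ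
      rw [← disjoint_map σ.toEmbedding]
      exact h hij _ ((mem_filter_univ p).1 hp) _ ((mem_filter_univ q).1 hq)) hn
  have hcount : ∀ i, (∑ σ : ZMod n ≃ α, #{p | (ZMod.arc a p).map σ.toEmbedding ∈ 𝒜 i}) *
      n.choose a = #(𝒜 i) * (n * n !) := fun i => by
    rw [sum_card_filter_comm, sum_mul]
    calc ∑ p, #{σ : ZMod n ≃ α | (ZMod.arc a p).map σ.toEmbedding ∈ 𝒜 i} * n.choose a
        = ∑ p : ZMod n, ∑ A ∈ 𝒜 i,
            #{σ : ZMod n ≃ α | (ZMod.arc a p).map σ.toEmbedding = A} * n.choose a := by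
          simp_rw [← sum_mul, sum_card_fiberwise_eq_card_filter]
      _ = ∑ _p : ZMod n, ∑ _A ∈ 𝒜 i, n ! := sum_congr rfl fun p _ => sum_congr rfl fun A hA => by
          simpa [ZMod.card_arc ha] using card_filter_equiv_map_eq_mul_choose e (ZMod.arc a p)
            (A := A) (by rw [h𝒜 i hA, ZMod.card_arc ha])
      _ = #(𝒜 i) * (n * n !) := by simp; ring
  have : (∑ i, #(𝒜 i)) * (n * n !) ≤ n.choose a * (n * n !) :=
    calc (∑ i, #(𝒜 i)) * (n * n !)
        = (∑ σ : ZMod n ≃ α, ∑ i, #{p | (ZMod.arc a p).map σ.toEmbedding ∈ 𝒜 i}) * n.choose a := by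
          rw [sum_comm, sum_mul, sum_mul]; simp_rw [hcount]
      _ ≤ (∑ _σ : ZMod n ≃ α, n) * n.choose a := by gcongr with σ; exact hcircle σ
      _ = n.choose a * (n * n !) := by simp [Fintype.card_equiv e]; ring
  exact le_of_mul_le_mul_right this (by positivity)

theorem sum_card_le_choose [Fintype α] [DecidableEq α] (h : CrossIntersecting 𝒜)
    (h𝒜 : ∀ i, (𝒜 i : Set (Finset α)).Sized a) (hn : Fintype.card ι * a ≤ Fintype.card α) :
    ∑ i, #(𝒜 i) ≤ (Fintype.card α).choose a := by
  obtain rfl | ha := Nat.eq_zero_or_pos a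
  · simpa using h.sum_card_le_one_of_sized_zero h𝒜
  cases isEmpty_or_nonempty ι
  · simp
  have han : a ≤ Fintype.card α := (Nat.le_mul_of_pos_left a Fintype.card_pos).trans hn
  have : Nonempty α := Fintype.card_pos_iff.1 (ha.trans_le han)
  exact h.sum_card_le_choose_of_nonempty h𝒜 han hn

theorem sum_card_le_choose_card [DecidableEq α] {X : Finset α} (h : CrossIntersecting 𝒜)
    (h𝒜 : ∀ i, (𝒜 i : Set (Finset α)).Sized a) (hX : ∀ i, ∀ A ∈ 𝒜 i, A ⊆ X)
    (hn : Fintype.card ι * a ≤ #X) : ∑ i, #(𝒜 i) ≤ (#X).choose a := by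
  set 𝒜' : ι → Finset (Finset X) := fun i => (𝒜 i).image (Finset.subtype (· ∈ X))
  have hinj : ∀ i, Set.InjOn (Finset.subtype (· ∈ X)) (𝒜 i) := fun i A hA B hB hAB => by
    rw [← subtype_map_of_mem (hX i A hA), ← subtype_map_of_mem (hX i B hB), hAB]
  have hcard : ∀ i, ∀ A ∈ 𝒜 i, #(A.subtype (· ∈ X)) = #A := fun i A hA => by
    rw [card_subtype, filter_true_of_mem (hX i A hA)]
  have h' : CrossIntersecting 𝒜' := by
    rintro i j hij _ hA' _ hB'
    obtain ⟨A, hA, rfl⟩ := mem_image.1 hA'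
    obtain ⟨B, hB, rfl⟩ := mem_image.1 hB'
    obtain ⟨x, hxA, hxB⟩ := not_disjoint_iff.1 (h hij A hA B hB)
    exact not_disjoint_iff.2 ⟨⟨x, hX i A hA hxA⟩, mem_subtype.2 hxA, mem_subtype.2 hxB⟩
  have h𝒜' : ∀ i, (𝒜' i : Set (Finset X)).Sized a := by
    rintro i _ hA'
    obtain ⟨A, hA, rfl⟩ := mem_image.1 hA'
    rw [hcard i A hA, h𝒜 i hA]
  calc ∑ i, #(𝒜 i) = ∑ i, #(𝒜' i) := sum_congr rfl fun i _ => (card_image_of_injOn (hinj i)).symm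
    _ ≤ (#X).choose a := by simpa using h'.sum_card_le_choose h𝒜' (by simpa using hn)

end CrossIntersecting

theorem sum_card_filter_inter_eq_le_choose {α ι : Type*} [Fintype α]
    [DecidableEq α] [Fintype ι] {F : Finset (Finset α)} (hF : (F : Set (Finset α)).Intersecting)
    {T : Finset α} {C : ι → Finset α} (hC : Pairwise (Disjoint on C)) {a : ℕ}
    (hFT : ∀ A ∈ F, #(A \ T) = a) (hn : Fintype.card ι * a ≤ #Tᶜ) :
    ∑ i, #{A ∈ F | A ∩ T = C i} ≤ (#Tᶜ).choose a := by
  set 𝒜 : ι → Finset (Finset α) := fun i => {A ∈ F | A ∩ T = C i}.image (· \ T)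
  have hinj : ∀ i, Set.InjOn (· \ T) ({A ∈ F | A ∩ T = C i} : Finset (Finset α)) :=
    fun i A hA B hB hAB => by
      rw [coe_filter] at hA hB
      simp only at hAB
      rw [← sdiff_union_inter A T, ← sdiff_union_inter B T, hAB, hA.2, hB.2]
  have hcross : CrossIntersecting 𝒜 := by
    rintro i j hij _ hA' _ hB'
    obtain ⟨A, hA, rfl⟩ := mem_image.1 hA'
    obtain ⟨B, hB, rfl⟩ := mem_image.1 hB'
    rw [mem_filter] at hA hB
    obtain ⟨x, hxA, hxB⟩ := not_disjoint_iff.1 (hF hA.1 hB.1)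
    have hxT : x ∉ T := fun hxT => disjoint_left.1 (hC hij)
      (hA.2 ▸ mem_inter.2 ⟨hxA, hxT⟩) (hB.2 ▸ mem_inter.2 ⟨hxB, hxT⟩)
    exact not_disjoint_iff.2 ⟨x, mem_sdiff.2 ⟨hxA, hxT⟩, mem_sdiff.2 ⟨hxB, hxT⟩⟩
  have h𝒜 : ∀ i, (𝒜 i : Set (Finset α)).Sized a := by
    rintro i _ hA'
    obtain ⟨A, hA, rfl⟩ := mem_image.1 hA'
    exact hFT A (mem_filter.1 hA).1
  have hX : ∀ i, ∀ A ∈ 𝒜 i, A ⊆ Tᶜ := by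
    rintro i _ hA'
    obtain ⟨A, -, rfl⟩ := mem_image.1 hA'
    rw [sdiff_eq_inter_compl]
    exact inter_subset_right
  calc ∑ i, #{A ∈ F | A ∩ T = C i} = ∑ i, #(𝒜 i) :=
        sum_congr rfl fun i _ => (card_image_of_injOn (hinj i)).symm
    _ ≤ (#Tᶜ).choose a := hcross.sum_card_le_choose_card h𝒜 hX hn

lemma card_le_sum_card_filter_inter_eq {α ι κ : Type*} [DecidableEq α] [Fintype ι] [Fintype κ]
    {F : Finset (Finset α)} {T : Finset α} {C : κ → ι → Finset α}
    (hC : ∀ A ∈ F, ∃ j i, A ∩ T = C j i) : #F ≤ ∑ j, ∑ i, #{A ∈ F | A ∩ T = C j i} := by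
  classical
  rw [← Fintype.sum_prod_type']
  refine (card_le_card fun A hA => ?_).trans card_biUnion_le
  obtain ⟨j, i, h⟩ := hC A hA
  exact mem_biUnion.2 ⟨(j, i), mem_univ _, mem_filter.2 ⟨hA, h⟩⟩

section Transversal

variable {α G : Type*} [DecidableEq α] [AddGroup G] {S₁ S₂ S₃ : Finset α}

def transversal (e₁ : G ≃ S₁) (e₂ : G ≃ S₂) (e₃ : G ≃ S₃) (u v w : G) : Finset α :=
  {(e₁ w : α), (e₂ (w + u) : α), (e₃ (w + v) : α)}

lemma exists_inter_union_union_eq_triple (h₁₂ : Disjoint S₁ S₂) (h₁₃ : Disjoint S₁ S₃)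
    (h₂₃ : Disjoint S₂ S₃) {A : Finset α} (h₁ : (A ∩ S₁).Nonempty) (h₂ : (A ∩ S₂).Nonempty)
    (h₃ : (A ∩ S₃).Nonempty) (hA : #(A ∩ (S₁ ∪ S₂ ∪ S₃)) = 3) :
    ∃ x₁ ∈ S₁, ∃ x₂ ∈ S₂, ∃ x₃ ∈ S₃, A ∩ (S₁ ∪ S₂ ∪ S₃) = {x₁, x₂, x₃} := by
  obtain ⟨x₁, hx₁⟩ := h₁
  obtain ⟨x₂, hx₂⟩ := h₂
  obtain ⟨x₃, hx₃⟩ := h₃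
  rw [mem_inter] at hx₁ hx₂ hx₃
  refine ⟨x₁, hx₁.2, x₂, hx₂.2, x₃, hx₃.2, (eq_of_subset_of_card_le ?_ ?_).symm⟩
  · simp [insert_subset_iff, *]
  · rw [hA, card_eq_three.2 ⟨x₁, x₂, x₃, disjoint_iff_ne.1 h₁₂ _ hx₁.2 _ hx₂.2,
      disjoint_iff_ne.1 h₁₃ _ hx₁.2 _ hx₃.2, disjoint_iff_ne.1 h₂₃ _ hx₂.2 _ hx₃.2, rfl⟩]

lemma exists_inter_union_union_eq_transversal (e₁ : G ≃ S₁) (e₂ : G ≃ S₂) (e₃ : G ≃ S₃)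
    (h₁₂ : Disjoint S₁ S₂) (h₁₃ : Disjoint S₁ S₃) (h₂₃ : Disjoint S₂ S₃) {A : Finset α}
    (h₁ : (A ∩ S₁).Nonempty) (h₂ : (A ∩ S₂).Nonempty) (h₃ : (A ∩ S₃).Nonempty)
    (hA : #(A ∩ (S₁ ∪ S₂ ∪ S₃)) = 3) :
    ∃ u v w, A ∩ (S₁ ∪ S₂ ∪ S₃) = transversal e₁ e₂ e₃ u v w := by
  obtain ⟨x₁, hx₁, x₂, hx₂, x₃, hx₃, hAS⟩ :=
    exists_inter_union_union_eq_triple h₁₂ h₁₃ h₂₃ h₁ h₂ h₃ hA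
  set w := e₁.symm ⟨x₁, hx₁⟩
  exact ⟨-w + e₂.symm ⟨x₂, hx₂⟩, -w + e₃.symm ⟨x₃, hx₃⟩, w, hAS.trans (by simp [transversal, w])⟩

lemma disjoint_triple (h₁₂ : Disjoint S₁ S₂) (h₁₃ : Disjoint S₁ S₃) (h₂₃ : Disjoint S₂ S₃)
    {x₁ y₁ x₂ y₂ x₃ y₃ : α} (hx₁ : x₁ ∈ S₁) (hy₁ : y₁ ∈ S₁) (hx₂ : x₂ ∈ S₂) (hy₂ : y₂ ∈ S₂)
    (hx₃ : x₃ ∈ S₃) (hy₃ : y₃ ∈ S₃) (h₁ : x₁ ≠ y₁) (h₂ : x₂ ≠ y₂) (h₃ : x₃ ≠ y₃) :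
    Disjoint ({x₁, x₂, x₃} : Finset α) {y₁, y₂, y₃} := by
  simp only [disjoint_iff_ne, mem_insert, mem_singleton, forall_eq_or_imp, forall_eq]
  exact ⟨⟨h₁, disjoint_iff_ne.1 h₁₂ _ hx₁ _ hy₂, disjoint_iff_ne.1 h₁₃ _ hx₁ _ hy₃⟩,
    ⟨(disjoint_iff_ne.1 h₁₂ _ hy₁ _ hx₂).symm, h₂, disjoint_iff_ne.1 h₂₃ _ hx₂ _ hy₃⟩,
    ⟨(disjoint_iff_ne.1 h₁₃ _ hy₁ _ hx₃).symm, (disjoint_iff_ne.1 h₂₃ _ hy₂ _ hx₃).symm, h₃⟩⟩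

lemma pairwise_disjoint_transversal (e₁ : G ≃ S₁) (e₂ : G ≃ S₂) (e₃ : G ≃ S₃)
    (h₁₂ : Disjoint S₁ S₂) (h₁₃ : Disjoint S₁ S₃) (h₂₃ : Disjoint S₂ S₃) (u v : G) :
    Pairwise (Disjoint on transversal e₁ e₂ e₃ u v) := fun w w' hww' =>
  disjoint_triple h₁₂ h₁₃ h₂₃ (e₁ w).2 (e₁ w').2 (e₂ _).2 (e₂ _).2 (e₃ _).2 (e₃ _).2
    (by simpa using e₁.injective.ne hww')
    (by simpa using e₂.injective.ne ((add_left_injective u).ne hww'))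
    (by simpa using e₃.injective.ne ((add_left_injective v).ne hww'))

end Transversal

theorem F_three_bound_general (k l m : ℕ) (hl : 4 ≤ l) (hm : k * l ≤ m)
    (T1 T2 T3 : Finset (Fin m))
    (hT1 : T1.card = l) (hT2 : T2.card = l) (hT3 : T3.card = l)
    (h12 : Disjoint T1 T2) (h13 : Disjoint T1 T3) (h23 : Disjoint T2 T3)
    (F : Finset (Finset (Fin m)))
    (huniform : ∀ A ∈ F, A.card = k)
    (hintersecting : ∀ A ∈ F, ∀ B ∈ F, (A ∩ B).Nonempty)
    (hmeet : ∀ A ∈ F, (A ∩ T1).Nonempty ∧ (A ∩ T2).Nonempty ∧ (A ∩ T3).Nonempty) :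
    (F.filter (fun A => (A ∩ (T1 ∪ T2 ∪ T3)).card = 3)).card ≤
      l ^ 2 * Nat.choose (m - 3 * l) (k - 3) := by
  set T := T1 ∪ T2 ∪ T3
  set F₃ := F.filter fun A => #(A ∩ T) = 3
  have : NeZero l := ⟨by omega⟩
  have hTc : #Tᶜ = m - 3 * l := by
    rw [card_compl, Fintype.card_fin, card_union_of_disjoint (disjoint_union_left.2 ⟨h13, h23⟩),
      card_union_of_disjoint h12, hT1, hT2, hT3]
    ring_nf
  let e₁ : ZMod l ≃ T1 := Fintype.equivOfCardEq (by simp [hT1])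
  let e₂ : ZMod l ≃ T2 := Fintype.equivOfCardEq (by simp [hT2])
  let e₃ : ZMod l ≃ T3 := Fintype.equivOfCardEq (by simp [hT3])
  have hF₃ : (F₃ : Set (Finset (Fin m))).Intersecting := fun A hA B hB =>
    not_disjoint_iff_nonempty_inter.2 (hintersecting A (mem_filter.1 hA).1 B (mem_filter.1 hB).1)
  have htail : ∀ A ∈ F₃, #(A \ T) = k - 3 := fun A hA => by
    have := card_sdiff_add_card_inter A T
    rw [huniform A (mem_filter.1 hA).1, (mem_filter.1 hA).2] at this
    omega
  have hn : Fintype.card (ZMod l) * (k - 3) ≤ #Tᶜ := by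
    rw [ZMod.card, hTc, Nat.mul_sub, mul_comm l k, mul_comm l 3]
    exact Nat.sub_le_sub_right hm _
  calc #F₃ ≤ ∑ uv : ZMod l × ZMod l, ∑ w, #{A ∈ F₃ | A ∩ T = transversal e₁ e₂ e₃ uv.1 uv.2 w} :=
        card_le_sum_card_filter_inter_eq fun A hA => by
          obtain ⟨u, v, w, h⟩ := exists_inter_union_union_eq_transversal e₁ e₂ e₃ h12 h13 h23
            (hmeet A (mem_filter.1 hA).1).1 (hmeet A (mem_filter.1 hA).1).2.1
            (hmeet A (mem_filter.1 hA).1).2.2 (mem_filter.1 hA).2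
          exact ⟨(u, v), w, h⟩
    _ ≤ ∑ _uv : ZMod l × ZMod l, (m - 3 * l).choose (k - 3) := sum_le_sum fun uv _ =>
        hTc ▸ sum_card_filter_inter_eq_le_choose hF₃
          (pairwise_disjoint_transversal e₁ e₂ e₃ h12 h13 h23 uv.1 uv.2) htail hn
    _ = l ^ 2 * (m - 3 * l).choose (k - 3) := by simp [ZMod.card, sq]

/-- In the proof of Theorem 1.3: the members of `F` meeting `T₁ ∪ T₂ ∪ T₃` in exactly
`3` elements number at most `ℓ² · C(m-3ℓ, k-3)`. -/
theorem F_three_bound (k l m : ℕ) (hk : 3 ≤ k) (hl : 4 ≤ l) (hm : k * l ≤ m)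
    (T1 T2 T3 : Finset (Fin m))
    (hT1 : T1.card = l) (hT2 : T2.card = l) (hT3 : T3.card = l)
    (h12 : Disjoint T1 T2) (h13 : Disjoint T1 T3) (h23 : Disjoint T2 T3)
    (F : Finset (Finset (Fin m)))
    (huniform : ∀ A ∈ F, A.card = k)
    (hintersecting : ∀ A ∈ F, ∀ B ∈ F, (A ∩ B).Nonempty)
    (hmeet : ∀ A ∈ F, (A ∩ T1).Nonempty ∧ (A ∩ T2).Nonempty ∧ (A ∩ T3).Nonempty) :
    (F.filter (fun A => (A ∩ (T1 ∪ T2 ∪ T3)).card = 3)).card ≤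
      l ^ 2 * Nat.choose (m - 3 * l) (k - 3) :=
  F_three_bound_general k l m hl hm T1 T2 T3 hT1 hT2 hT3 h12 h13 h23 F huniform hintersecting hmeet
end
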